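/- arXiv:1801.09341 — 3 statements merged into one kernel-verified Lean document; each statement's English description precedes it below -/
import Mathlib

section
/- Let G be a nonempty subset of L⁰(F) (equivalence classes of real-valued measurable random variables) that is stable under countable concatenation (for any sequence (ξₙ) in G and any countable measurable partition (Aₙ) of Ω, the function equal to ξₙ on Aₙ belongs to G) and bounded above by some element of L⁰(F). Then for any ε ∈ L⁰(F) with ε > 0 almost surely, there exists ξ_ε ∈ G such that ξ_ε > ⋁G − ε almost surely on all of Ω. -/
open MeasureTheory Filter Function Set

/-- Let `G` be a nonempty subset of `L⁰(F)` that is stable under countable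
concatenation and bounded above, with essential supremum `g` (the least a.e. upper bound).
Then for every `ε ∈ L⁰(F)` with `ε > 0` a.s. there is `ξ_ε ∈ G` with
`ξ_ε > ⋁G − ε` almost surely on all of `Ω`. -/
theorem stmt2
    {Ω : Type*} [MeasurableSpace Ω] (μ : Measure Ω) [IsProbabilityMeasure μ]
    (G : Set (Ω → ℝ)) (hmeas : ∀ f ∈ G, Measurable f) (hne : G.Nonempty)
    (hstable : ∀ ξ : ℕ → Ω → ℝ, (∀ n, ξ n ∈ G) →
      ∀ A : ℕ → Set Ω, (∀ n, MeasurableSet (A n)) → Pairwise (Disjoint on A) →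
        (⋃ n, A n) = Set.univ →
        ∃ η ∈ G, ∀ n, ∀ᵐ ω ∂μ, ω ∈ A n → η ω = ξ n ω)
    (g : Ω → ℝ) (hgm : Measurable g)
    (hub : ∀ f ∈ G, f ≤ᵐ[μ] g)
    (hlub : ∀ u : Ω → ℝ, Measurable u → (∀ f ∈ G, f ≤ᵐ[μ] u) → g ≤ᵐ[μ] u)
    (ε : Ω → ℝ) (hεm : Measurable ε) (hε : ∀ᵐ ω ∂μ, 0 < ε ω) :
    ∃ ξ ∈ G, ∀ᵐ ω ∂μ, g ω - ε ω < ξ ω := by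
  classical
  -- integrability of arctan ∘ f
  have hint : ∀ f : Ω → ℝ, Measurable f →
      Integrable (fun ω => Real.arctan (f ω)) μ := by
    intro f hf
    refine Integrable.mono' (integrable_const (Real.pi / 2))
      ((Real.continuous_arctan.measurable.comp hf).aestronglyMeasurable) ?_
    filter_upwards with ω
    rw [Real.norm_eq_abs, abs_le]
    exact ⟨le_of_lt (by simpa using Real.neg_pi_div_two_lt_arctan (f ω)),
      (Real.arctan_lt_pi_div_two (f ω)).le⟩
  set Φ : (Ω → ℝ) → ℝ := fun f => ∫ ω, Real.arctan (f ω) ∂μ with hΦdef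
  have hΦle : ∀ f ∈ G, Φ f ≤ Real.pi / 2 := by
    intro f hf
    calc Φ f ≤ ∫ _, Real.pi / 2 ∂μ := by
          refine integral_mono (hint f (hmeas f hf)) (integrable_const _) ?_
          intro ω; exact (Real.arctan_lt_pi_div_two (f ω)).le
      _ = Real.pi / 2 := by simp
  set S : Set ℝ := Φ '' G with hSdef
  have hSne : S.Nonempty := hne.image _
  have hSbdd : BddAbove S := by
    refine ⟨Real.pi / 2, ?_⟩
    rintro x ⟨f, hf, rfl⟩
    exact hΦle f hf
  set M : ℝ := sSup S with hMdef
  -- approximating sequence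
  have hF : ∀ n : ℕ, ∃ f ∈ G, M - 1 / (n + 1) < Φ f := by
    intro n
    have h1 : M - 1 / (n + 1 : ℝ) < M := by
      have : (0:ℝ) < 1 / (n + 1 : ℝ) := by positivity
      linarith
    obtain ⟨x, ⟨f, hf, rfl⟩, hx⟩ := exists_lt_of_lt_csSup hSne h1
    exact ⟨f, hf, hx⟩
  choose F hFG hFlt using hF
  -- closure of G under pairwise max, up to a.e. equality
  have hmax : ∀ f₁ : Ω → ℝ, f₁ ∈ G → ∀ f₂ : Ω → ℝ, f₂ ∈ G →
      ∃ h ∈ G, h =ᵐ[μ] fun ω => max (f₁ ω) (f₂ ω) := by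
    intro f₁ h₁ f₂ h₂
    set B : Set Ω := {ω | f₂ ω ≤ f₁ ω} with hBdef
    have hBm : MeasurableSet B := measurableSet_le (hmeas f₂ h₂) (hmeas f₁ h₁)
    set A : ℕ → Set Ω := fun n => if n = 0 then B else if n = 1 then Bᶜ else ∅ with hAdef
    have hAm : ∀ n, MeasurableSet (A n) := by
      intro n
      rcases n with _ | n
      · simpa [hAdef] using hBm
      · rcases n with _ | n
        · simpa [hAdef] using hBm.compl
        · simp [hAdef]
    have hA0 : A 0 = B := rfl
    have hA1 : A 1 = Bᶜ := rfl
    have hA2 : ∀ i : ℕ, A (i + 2) = ∅ := fun i => rfl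
    have hAdisj : Pairwise (Disjoint on A) := by
      intro i j hij
      rcases i with _ | _ | i <;> rcases j with _ | _ | j
      · exact absurd rfl hij
      · rw [onFun, hA0, hA1]; exact disjoint_compl_right
      · rw [onFun, hA2]; exact disjoint_bot_right
      · rw [onFun, hA0, hA1]; exact disjoint_compl_left
      · exact absurd rfl hij
      · rw [onFun, hA2]; exact disjoint_bot_right
      · rw [onFun, hA2]; exact disjoint_bot_left
      · rw [onFun, hA2]; exact disjoint_bot_left
      · rw [onFun, hA2]; exact disjoint_bot_left
    have hAun : (⋃ n, A n) = Set.univ := by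
      apply Set.eq_univ_of_forall
      intro ω
      by_cases hω : ω ∈ B
      · exact Set.mem_iUnion.mpr ⟨0, by simpa [hAdef] using hω⟩
      · exact Set.mem_iUnion.mpr ⟨1, by simpa [hAdef] using hω⟩
    obtain ⟨η, hηG, hη⟩ := hstable (fun n => if n = 0 then f₁ else f₂)
      (by intro n; by_cases hn : n = 0 <;> simp [hn, h₁, h₂]) A hAm hAdisj hAun
    refine ⟨η, hηG, ?_⟩
    filter_upwards [hη 0, hη 1] with ω h0 h1
    by_cases hω : ω ∈ B
    · have := h0 (by simpa [hAdef] using hω)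
      norm_num at this
      rw [this, max_eq_left hω]
    · have := h1 (by simpa [hAdef] using hω)
      norm_num at this
      rw [this, max_eq_right (le_of_not_ge hω)]
  have hmax' : ∀ f₁ f₂ : {f : Ω → ℝ // f ∈ G}, ∃ h : {f : Ω → ℝ // f ∈ G},
      (h : Ω → ℝ) =ᵐ[μ] fun ω => max (f₁.1 ω) (f₂.1 ω) := by
    intro f₁ f₂
    obtain ⟨h, hG, hh⟩ := hmax f₁.1 f₁.2 f₂.1 f₂.2
    exact ⟨⟨h, hG⟩, hh⟩
  choose m hm using hmax'
  -- the increasing sequence H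
  set F' : ℕ → {f : Ω → ℝ // f ∈ G} := fun n => ⟨F n, hFG n⟩ with hF'def
  set H : ℕ → {f : Ω → ℝ // f ∈ G} :=
    fun n => Nat.rec (F' 0) (fun n ih => m ih (F' (n + 1))) n with hHdef
  set h : ℕ → Ω → ℝ := fun n => (H n : Ω → ℝ) with hhdef
  have hhG : ∀ n, h n ∈ G := fun n => (H n).2
  have hhm : ∀ n, Measurable (h n) := fun n => hmeas _ (hhG n)
  have hHsucc : ∀ n, h (n + 1) =ᵐ[μ] fun ω => max (h n ω) (F (n + 1) ω) :=
    fun n => hm (H n) (F' (n + 1))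
  have hmono : ∀ n, h n ≤ᵐ[μ] h (n + 1) := by
    intro n
    filter_upwards [hHsucc n] with ω hω
    rw [hω]; exact le_max_left _ _
  have hFh : ∀ n, F n ≤ᵐ[μ] h n := by
    intro n
    rcases n with _ | n
    · exact Eventually.of_forall fun ω => le_rfl
    · filter_upwards [hHsucc n] with ω hω
      rw [hω]; exact le_max_right _ _
  have hΦh : ∀ n : ℕ, M - 1 / (n + 1) < Φ (h n) := by
    intro n
    refine lt_of_lt_of_le (hFlt n) ?_
    refine integral_mono_ae (hint _ (hmeas _ (hFG n))) (hint _ (hhm n)) ?_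
    filter_upwards [hFh n] with ω hω
    exact Real.arctan_strictMono.monotone hω
  -- the candidate essential supremum
  set u : Ω → ℝ := fun ω => ⨆ n, min (h n ω) (g ω) with hudef
  have hum : Measurable u := Measurable.iSup fun n => (hhm n).min hgm
  have hbdd : ∀ ω, BddAbove (Set.range fun n => min (h n ω) (g ω)) :=
    fun ω => ⟨g ω, by rintro x ⟨n, rfl⟩; exact min_le_right _ _⟩
  -- the good a.e. set
  have hE : ∀ᵐ ω ∂μ, (∀ n, h n ω ≤ h (n + 1) ω) ∧ (∀ n, h n ω ≤ g ω) := by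
    refine ((ae_all_iff.mpr hmono).and (ae_all_iff.mpr fun n => hub _ (hhG n)))
  have hEu : ∀ᵐ ω ∂μ, Tendsto (fun n => h n ω) atTop (nhds (u ω)) := by
    filter_upwards [hE] with ω ⟨hω1, hω2⟩
    have hmin : ∀ n, min (h n ω) (g ω) = h n ω := fun n => min_eq_left (hω2 n)
    have hmono' : Monotone fun n => h n ω := monotone_nat_of_le_succ hω1
    have : u ω = ⨆ n, h n ω := by
      simp only [hudef]
      exact iSup_congr hmin
    rw [this]
    exact tendsto_atTop_ciSup hmono' (by
      have := hbdd ω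
      simpa only [hmin] using this)
  -- ∫ arctan u = lim ∫ arctan (h n), and it is ≥ M
  have htend : Tendsto (fun n => Φ (h n)) atTop (nhds (Φ u)) := by
    refine tendsto_integral_of_dominated_convergence (fun _ => Real.pi / 2)
      (fun n => ((Real.continuous_arctan.measurable.comp (hhm n)).aestronglyMeasurable))
      (integrable_const _) (fun n => ?_) ?_
    · filter_upwards with ω
      rw [Real.norm_eq_abs, abs_le]
      exact ⟨le_of_lt (by simpa using Real.neg_pi_div_two_lt_arctan (h n ω)),
        (Real.arctan_lt_pi_div_two _).le⟩
    · filter_upwards [hEu] with ω hω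
      exact (Real.continuous_arctan.continuousAt.tendsto).comp hω
  have hMu : M ≤ Φ u := by
    have h1 : Tendsto (fun n : ℕ => M - 1 / (n + 1 : ℝ)) atTop (nhds M) := by
      have := tendsto_one_div_add_atTop_nhds_zero_nat (𝕜 := ℝ)
      simpa using tendsto_const_nhds.sub this
    exact le_of_tendsto_of_tendsto h1 htend
      (Eventually.of_forall fun n => (hΦh n).le)
  -- u is an a.e. upper bound of G
  have hu_ub : ∀ f ∈ G, f ≤ᵐ[μ] u := by
    intro f hf
    set k : ℕ → {f : Ω → ℝ // f ∈ G} := fun n => m ⟨f, hf⟩ (H n) with hkdef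
    have hk : ∀ n, (k n : Ω → ℝ) =ᵐ[μ] fun ω => max (f ω) (h n ω) :=
      fun n => hm ⟨f, hf⟩ (H n)
    have hkle : ∀ n, Φ (fun ω => max (f ω) (h n ω)) ≤ M := by
      intro n
      have : Φ (fun ω => max (f ω) (h n ω)) = Φ (k n) :=
        (integral_congr_ae (by filter_upwards [hk n] with ω hω; rw [hω])).symm
      rw [this]
      exact le_csSup hSbdd ⟨(k n : Ω → ℝ), (k n).2, rfl⟩
    have htend2 : Tendsto (fun n => Φ (fun ω => max (f ω) (h n ω))) atTop
        (nhds (Φ (fun ω => max (f ω) (u ω)))) := by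
      refine tendsto_integral_of_dominated_convergence (fun _ => Real.pi / 2)
        (fun n => ((Real.continuous_arctan.measurable.comp
          ((hmeas f hf).max (hhm n))).aestronglyMeasurable))
        (integrable_const _) (fun n => ?_) ?_
      · filter_upwards with ω
        rw [Real.norm_eq_abs, abs_le]
        exact ⟨le_of_lt (by simpa using Real.neg_pi_div_two_lt_arctan _),
          (Real.arctan_lt_pi_div_two _).le⟩
      · filter_upwards [hEu] with ω hω
        exact (Real.continuous_arctan.continuousAt.tendsto).comp
          (tendsto_const_nhds.max hω)
    have hMax_le : Φ (fun ω => max (f ω) (u ω)) ≤ M :=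
      le_of_tendsto htend2 (Eventually.of_forall hkle)
    -- now compare with Φ u
    have hfu_m : Measurable fun ω => max (f ω) (u ω) := (hmeas f hf).max hum
    have hge : ∀ ω, Real.arctan (u ω) ≤ Real.arctan (max (f ω) (u ω)) :=
      fun ω => Real.arctan_strictMono.monotone (le_max_right _ _)
    have hdiff : (fun ω => Real.arctan (max (f ω) (u ω)) - Real.arctan (u ω)) =ᵐ[μ] 0 := by
      rw [← integral_eq_zero_iff_of_nonneg_ae
        (Eventually.of_forall fun ω => sub_nonneg.mpr (hge ω))
        ((hint _ hfu_m).sub (hint _ hum))]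
      have : ∫ ω, (Real.arctan (max (f ω) (u ω)) - Real.arctan (u ω)) ∂μ
          = Φ (fun ω => max (f ω) (u ω)) - Φ u :=
        integral_sub (hint _ hfu_m) (hint _ hum)
      rw [this]
      have : Φ (fun ω => max (f ω) (u ω)) ≤ Φ u := hMax_le.trans hMu
      have h2 : Φ u ≤ Φ (fun ω => max (f ω) (u ω)) :=
        integral_mono (hint _ hum) (hint _ hfu_m) hge
      linarith
    filter_upwards [hdiff] with ω hω
    have : Real.arctan (max (f ω) (u ω)) = Real.arctan (u ω) := by
      have := sub_eq_zero.mp hω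
      exact this
    have := Real.arctan_injective this
    exact max_eq_right_iff.mp this
  have hgu : g ≤ᵐ[μ] u := hlub u hum hu_ub
  -- a.e., some h n exceeds g - ε
  have hex : ∀ᵐ ω ∂μ, ∃ n, g ω - ε ω < h n ω := by
    filter_upwards [hgu, hε] with ω hgω hεω
    have hlt : g ω - ε ω < u ω := lt_of_lt_of_le (by linarith) hgω
    obtain ⟨n, hn⟩ := exists_lt_of_lt_ciSup hlt
    exact ⟨n, hn.trans_le (min_le_left _ _)⟩
  -- build the partition
  set A : ℕ → Set Ω := fun n => {ω | g ω - ε ω < h n ω} with hAdef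
  have hAm : ∀ n, MeasurableSet (A n) :=
    fun n => measurableSet_lt (hgm.sub hεm) (hhm n)
  set D : ℕ → Set Ω := disjointed A with hDdef
  have hDm : ∀ n, MeasurableSet (D n) := MeasurableSet.disjointed hAm
  have hDsub : ∀ n, D n ⊆ A n := fun n => disjointed_subset A n
  set C : ℕ → Set Ω := fun n => if n = 0 then D 0 ∪ (⋃ k, A k)ᶜ else D n with hCdef
  have hCm : ∀ n, MeasurableSet (C n) := by
    intro n
    rcases n with _ | n
    · simpa [hCdef] using (hDm 0).union (MeasurableSet.iUnion hAm).compl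
    · simpa [hCdef] using hDm (n + 1)
  have hCdisj : Pairwise (Disjoint on C) := by
    intro i j hij
    have hD : Disjoint (D i) (D j) := disjoint_disjointed A hij
    have hcomp : ∀ k, k ≠ 0 → Disjoint ((⋃ k, A k)ᶜ) (D k) := by
      intro k _
      exact Disjoint.mono_right ((hDsub k).trans (Set.subset_iUnion A k))
        disjoint_compl_left
    rcases i with _ | i <;> rcases j with _ | j
    · exact absurd rfl hij
    · simp only [hCdef, onFun, if_pos rfl, if_neg (Nat.succ_ne_zero j)]
      exact Disjoint.union_left hD (hcomp _ (Nat.succ_ne_zero j))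
    · simp only [hCdef, onFun, if_pos rfl, if_neg (Nat.succ_ne_zero i)]
      exact Disjoint.union_right hD ((hcomp _ (Nat.succ_ne_zero i)).symm)
    · simp only [hCdef, onFun, if_neg (Nat.succ_ne_zero i), if_neg (Nat.succ_ne_zero j)]
      exact hD
  have hCun : (⋃ n, C n) = Set.univ := by
    apply Set.eq_univ_of_forall
    intro ω
    by_cases hω : ω ∈ ⋃ k, A k
    · rw [← iUnion_disjointed] at hω
      obtain ⟨n, hn⟩ := Set.mem_iUnion.mp hω
      rcases n with _ | n
      · refine Set.mem_iUnion.mpr ⟨0, ?_⟩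
        show ω ∈ D 0 ∪ (⋃ k, A k)ᶜ
        exact Set.mem_union_left _ hn
      · exact Set.mem_iUnion.mpr ⟨n + 1, by simpa [hCdef] using hn⟩
    · refine Set.mem_iUnion.mpr ⟨0, ?_⟩
      show ω ∈ D 0 ∪ (⋃ k, A k)ᶜ
      exact Set.mem_union_right _ hω
  obtain ⟨ξ, hξG, hξ⟩ := hstable (fun n => h n) hhG C hCm hCdisj hCun
  refine ⟨ξ, hξG, ?_⟩
  filter_upwards [ae_all_iff.mpr hξ, hex] with ω hω hexω
  obtain ⟨n₀, hn₀⟩ := hexω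
  have hωA : ω ∈ ⋃ k, A k := Set.mem_iUnion.mpr ⟨n₀, hn₀⟩
  have hωC : ω ∈ ⋃ n, C n := hCun ▸ Set.mem_univ ω
  obtain ⟨n, hn⟩ := Set.mem_iUnion.mp hωC
  rcases n with _ | n
  · simp only [hCdef, if_pos rfl] at hn
    rcases hn with hn | hn
    · have hA0 : ω ∈ A 0 := hDsub 0 hn
      have := hω 0 (show ω ∈ D 0 ∪ (⋃ k, A k)ᶜ from Set.mem_union_left _ hn)
      rw [this]
      exact hA0
    · exact absurd hωA hn
  · have hAn : ω ∈ A (n + 1) := hDsub (n + 1) hn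
    have := hω (n + 1) (by simpa [hCdef] using hn)
    rw [this]
    exact hAn
end

section
/- Let (E, ‖·‖) be a complete RN module with base (Ω, F, P), G a closed stable subset of E, and T : G → G a stable mapping. If there exist a positive-integer-valued F-measurable random variable L and ξ ∈ L⁰₊(F) with ξ < 1 almost surely such that ‖T^(L)(x) − T^(L)(y)‖ ≤ ξ·‖x − y‖ for all x, y ∈ G, where T^(L)(x) := Σ_k 1_{(L=k)} T^(k)(x), then T has a unique fixed point in G. -/
open MeasureTheory Filter Function Set

/-- A *random normed module* over `ℝ` with base `(Ω, F, μ)`, encoded concretely: `E` is a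
module over the ring `Ω → ℝ` of (pointwise) random variables, together with an `L⁰`-norm
`rnorm : E → Ω → ℝ` satisfying the RN-module axioms almost everywhere. -/
structure RNModule (Ω : Type*) [MeasurableSpace Ω] (μ : Measure Ω) (E : Type*)
    [AddCommGroup E] [Module (Ω → ℝ) E] where
  rnorm : E → Ω → ℝ
  measurable_rnorm : ∀ x, Measurable (rnorm x)
  rnorm_nonneg : ∀ x, ∀ᵐ ω ∂μ, 0 ≤ rnorm x ω
  rnorm_eq_zero : ∀ x, rnorm x =ᵐ[μ] 0 → x = 0
  rnorm_smul : ∀ ξ : Ω → ℝ, Measurable ξ → ∀ x,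
    rnorm (ξ • x) =ᵐ[μ] fun ω => |ξ ω| * rnorm x ω
  rnorm_add : ∀ x y, ∀ᵐ ω ∂μ, rnorm (x + y) ω ≤ rnorm x ω + rnorm y ω

namespace RNModule

variable {Ω E : Type*} [MeasurableSpace Ω] {μ : Measure Ω}
  [AddCommGroup E] [Module (Ω → ℝ) E]

/-- Convergence of a sequence in the `(ε,λ)`-topology, i.e. convergence in probability of
the `L⁰`-norm of the differences. -/
def TendstoInProb (N : RNModule Ω μ E) (f : ℕ → E) (x : E) : Prop :=
  ∀ ε : ℝ, 0 < ε →
    Tendsto (fun n => μ {ω | ε ≤ N.rnorm (f n - x) ω}) atTop (nhds 0)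

/-- Cauchy sequences for the `(ε,λ)`-uniformity. -/
def CauchyInProb (N : RNModule Ω μ E) (f : ℕ → E) : Prop :=
  ∀ ε : ℝ, 0 < ε → ∀ δ : ℝ, 0 < δ → ∃ K : ℕ, ∀ m ≥ K, ∀ n ≥ K,
    μ {ω | ε ≤ N.rnorm (f m - f n) ω} ≤ ENNReal.ofReal δ

/-- `𝒯_{ε,λ}`-completeness of a random normed module. -/
def Complete (N : RNModule Ω μ E) : Prop :=
  ∀ f : ℕ → E, N.CauchyInProb f → ∃ x : E, N.TendstoInProb f x

/-- A subset is `(ε,λ)`-closed iff it is sequentially closed (the topology is metrizable). -/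
def IsClosedSet (N : RNModule Ω μ E) (G : Set E) : Prop :=
  ∀ (f : ℕ → E) (x : E), (∀ n, f n ∈ G) → N.TendstoInProb f x → x ∈ G

end RNModule

/-- A countable measurable partition of `Ω`. -/
def MeasPartition {Ω : Type*} [MeasurableSpace Ω] (A : ℕ → Set Ω) : Prop :=
  (∀ n, MeasurableSet (A n)) ∧ Pairwise (Disjoint on A) ∧ (⋃ n, A n) = Set.univ

/-- The indicator of a measurable set, as an element of the ring `Ω → ℝ`. -/
noncomputable def indR {Ω : Type*} (A : Set Ω) : Ω → ℝ := A.indicator fun _ => (1 : ℝ)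

namespace RNModule

variable {Ω E : Type*} [MeasurableSpace Ω] {μ : Measure Ω}
  [AddCommGroup E] [Module (Ω → ℝ) E]

/-- A subset `G` has the countable concatenation property (is *stable*): for every sequence in
`G` and every countable measurable partition of `Ω`, some element of `G` agrees with `g n`
on `A n` for every `n`. -/
def StableSet (N : RNModule Ω μ E) (G : Set E) : Prop :=
  ∀ g : ℕ → E, (∀ n, g n ∈ G) → ∀ A : ℕ → Set Ω, MeasPartition A →
    ∃ x ∈ G, ∀ n, indR (A n) • x = indR (A n) • g n

/-- `L⁰`-convexity of a subset. -/
def L0Convex (N : RNModule Ω μ E) (G : Set E) : Prop :=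
  ∀ x ∈ G, ∀ y ∈ G, ∀ ξ : Ω → ℝ, Measurable ξ →
    (∀ ω, 0 ≤ ξ ω) → (∀ ω, ξ ω ≤ 1) → ξ • x + (1 - ξ) • y ∈ G

/-- A subset is a.s. bounded if its `L⁰`-norms admit a common `L⁰` upper bound. -/
def AeBounded (N : RNModule Ω μ E) (G : Set E) : Prop :=
  ∃ η : Ω → ℝ, Measurable η ∧ ∀ x ∈ G, ∀ᵐ ω ∂μ, N.rnorm x ω ≤ η ω

/-- `D` is the random diameter of `H`: the least a.e. upper bound of `{‖x−y‖ : x, y ∈ H}`. -/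
def IsRandomDiam (N : RNModule Ω μ E) (H : Set E) (D : Ω → ℝ) : Prop :=
  Measurable D ∧
  (∀ x ∈ H, ∀ y ∈ H, ∀ᵐ ω ∂μ, N.rnorm (x - y) ω ≤ D ω) ∧
  (∀ D' : Ω → ℝ, Measurable D' →
    (∀ x ∈ H, ∀ y ∈ H, ∀ᵐ ω ∂μ, N.rnorm (x - y) ω ≤ D' ω) → ∀ᵐ ω ∂μ, D ω ≤ D' ω)

/-- Random normal structure of a closed `L⁰`-convex set `G`: every nonempty a.s. bounded closed
`L⁰`-convex subset `H` of `G` with random diameter `D(H) > 0` somewhere admits a point `h`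
whose random radius is `< D(H)` a.e. on `(D(H) > 0)`. -/
def RandomNormalStructure (N : RNModule Ω μ E) (G : Set E) : Prop :=
  ∀ H : Set E, H ⊆ G → H.Nonempty → N.IsClosedSet H → N.L0Convex H → N.AeBounded H →
  ∀ D : Ω → ℝ, N.IsRandomDiam H D → 0 < μ {ω | 0 < D ω} →
  ∃ h ∈ H, ∃ r : Ω → ℝ, Measurable r ∧
    (∀ x ∈ H, ∀ᵐ ω ∂μ, N.rnorm (h - x) ω ≤ r ω) ∧
    (∀ᵐ ω ∂μ, 0 < D ω → r ω < D ω)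

/-- `E` has full support: on every set of positive measure the norms of elements of `E` are
essentially unbounded. -/
def FullSupport (N : RNModule Ω μ E) : Prop :=
  ∀ A : Set Ω, MeasurableSet A → 0 < μ A → ∀ η : Ω → ℝ, Measurable η →
    ∃ x : E, 0 < μ {ω ∈ A | η ω < N.rnorm x ω}

/-- Random uniform convexity of a random normed module. -/
def RandomUniformlyConvex (N : RNModule Ω μ E) : Prop :=
  ∀ ε : Ω → ℝ, Measurable ε → (∃ l : ℝ, 0 < l ∧ ∀ᵐ ω ∂μ, l ≤ ε ω ∧ ε ω ≤ 2) →
  ∃ δ : Ω → ℝ, Measurable δ ∧ (∃ c : ℝ, 0 < c ∧ ∀ᵐ ω ∂μ, c ≤ δ ω ∧ δ ω ≤ 1) ∧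
    ∀ x y : E, (∀ᵐ ω ∂μ, N.rnorm x ω ≤ 1) → (∀ᵐ ω ∂μ, N.rnorm y ω ≤ 1) →
    ∀ D : Set Ω, MeasurableSet D → 0 < μ D →
    (∀ᵐ ω ∂μ, ω ∈ D → 0 < N.rnorm x ω ∧ 0 < N.rnorm y ω ∧ 0 < N.rnorm (x - y) ω) →
    (∀ᵐ ω ∂μ, ω ∈ D → ε ω ≤ N.rnorm (x - y) ω) →
    ∀ᵐ ω ∂μ, ω ∈ D → N.rnorm (x + y) ω ≤ 2 * (1 - δ ω)

/-- `L⁰`-convex compactness: every nonempty family of closed `L⁰`-convex subsets of `G`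
with the finite intersection property has nonempty intersection. -/
def L0ConvexCompact (N : RNModule Ω μ E) (G : Set E) : Prop :=
  ∀ 𝒞 : Set (Set E), 𝒞.Nonempty →
    (∀ C ∈ 𝒞, C ⊆ G ∧ N.IsClosedSet C ∧ N.L0Convex C) →
    (∀ 𝒮 : Finset (Set E), ↑𝒮 ⊆ 𝒞 → 𝒮.Nonempty → (⋂ C ∈ 𝒮, C).Nonempty) →
    (⋂₀ 𝒞).Nonempty

end RNModule

section Aux

open MeasureTheory Filter Function Set

variable {Ω E : Type*} [MeasurableSpace Ω] {μ : Measure Ω}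
  [AddCommGroup E] [Module (Ω → ℝ) E] (N : RNModule Ω μ E)

lemma aux_rnorm_zero : N.rnorm 0 =ᵐ[μ] 0 := by
  have h := N.rnorm_smul (fun _ => (0:ℝ)) measurable_const 0
  rw [show (fun _ : Ω => (0:ℝ)) = (0 : Ω → ℝ) from rfl, zero_smul] at h
  filter_upwards [h] with ω hω
  simpa using hω

lemma aux_rnorm_neg (z : E) : N.rnorm (-z) =ᵐ[μ] N.rnorm z := by
  have h := N.rnorm_smul (fun _ => (-1:ℝ)) measurable_const z
  rw [show (fun _ : Ω => (-1:ℝ)) = (-1 : Ω → ℝ) from rfl, neg_one_smul] at h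
  filter_upwards [h] with ω hω
  simpa using hω

lemma aux_eq_of_rnorm_le_zero {x y : E} (h : ∀ᵐ ω ∂μ, N.rnorm (x - y) ω ≤ 0) :
    x = y := by
  have h0 : N.rnorm (x - y) =ᵐ[μ] 0 := by
    filter_upwards [h, N.rnorm_nonneg (x - y)] with ω h1 h2
    exact le_antisymm h1 h2
  have := N.rnorm_eq_zero _ h0
  exact sub_eq_zero.mp this

lemma aux_measurable_indR {A : Set Ω} (hA : MeasurableSet A) :
    Measurable (indR A) := measurable_const.indicator hA

include N in
lemma aux_concat_unique {A : ℕ → Set Ω} (hA : MeasPartition A) {u v : E}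
    (h : ∀ k, indR (A k) • u = indR (A k) • v) : u = v := by
  apply aux_eq_of_rnorm_le_zero N
  have hk : ∀ k : ℕ, ∀ᵐ ω ∂μ, ω ∈ A k → N.rnorm (u - v) ω ≤ 0 := by
    intro k
    have hz : indR (A k) • (u - v) = 0 := by
      rw [smul_sub, h k, sub_self]
    have h1 := N.rnorm_smul (indR (A k)) (aux_measurable_indR (hA.1 k)) (u - v)
    rw [hz] at h1
    filter_upwards [h1, aux_rnorm_zero N] with ω hω h0 hmem
    have : |indR (A k) ω| * N.rnorm (u - v) ω = 0 := by rw [← hω, h0]; rfl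
    have hi : indR (A k) ω = 1 := by simp [indR, Set.indicator_of_mem hmem]
    rw [hi] at this
    simpa using this.le
  have : ∀ᵐ ω ∂μ, ∀ k : ℕ, ω ∈ A k → N.rnorm (u - v) ω ≤ 0 := ae_all_iff.mpr hk
  filter_upwards [this] with ω hω
  have : ω ∈ ⋃ n, A n := hA.2.2 ▸ Set.mem_univ ω
  obtain ⟨k, hk⟩ := Set.mem_iUnion.mp this
  exact hω k hk

lemma aux_tendstoInProb_unique {f : ℕ → E} {x y : E}
    (hx : N.TendstoInProb f x) (hy : N.TendstoInProb f y) : x = y := by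
  apply aux_eq_of_rnorm_le_zero N
  -- show μ {ω | ε ≤ rnorm (x-y)} = 0 for all ε > 0
  have key : ∀ ε : ℝ, 0 < ε → μ {ω | ε ≤ N.rnorm (x - y) ω} = 0 := by
    intro ε hε
    have hbound : ∀ n, μ {ω | ε ≤ N.rnorm (x - y) ω} ≤
        μ {ω | ε/2 ≤ N.rnorm (f n - x) ω} + μ {ω | ε/2 ≤ N.rnorm (f n - y) ω} := by
      intro n
      have hsub : {ω | ε ≤ N.rnorm (x - y) ω} ≤ᵐ[μ]
          ({ω | ε/2 ≤ N.rnorm (f n - x) ω} ∪ {ω | ε/2 ≤ N.rnorm (f n - y) ω} : Set Ω) := by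
        have htri := N.rnorm_add (-(f n - x)) (f n - y)
        have hneg := aux_rnorm_neg N (f n - x)
        filter_upwards [htri, hneg] with ω h1 h2
        intro hω
        have hω2 : ε ≤ N.rnorm (x - y) ω := hω
        by_contra hcon
        have hcon' : ¬(ε/2 ≤ N.rnorm (f n - x) ω ∨ ε/2 ≤ N.rnorm (f n - y) ω) := hcon
        push_neg at hcon'
        have heq : -(f n - x) + (f n - y) = x - y := by abel
        rw [heq] at h1
        have : N.rnorm (x - y) ω < ε/2 + ε/2 :=
          lt_of_le_of_lt h1 (add_lt_add (h2.trans_lt hcon'.1) hcon'.2)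
        linarith
      calc μ {ω | ε ≤ N.rnorm (x - y) ω}
          ≤ μ ({ω | ε/2 ≤ N.rnorm (f n - x) ω} ∪ {ω | ε/2 ≤ N.rnorm (f n - y) ω}) :=
            measure_mono_ae hsub
        _ ≤ _ := measure_union_le _ _
    have htend : Tendsto (fun n => μ {ω | ε/2 ≤ N.rnorm (f n - x) ω}
        + μ {ω | ε/2 ≤ N.rnorm (f n - y) ω}) atTop (nhds 0) := by
      simpa using (hx (ε/2) (by linarith)).add (hy (ε/2) (by linarith))
    exact le_antisymm (ge_of_tendsto' htend hbound) zero_le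
  have : μ {ω | 0 < N.rnorm (x - y) ω} = 0 := by
    have hcover : {ω | 0 < N.rnorm (x - y) ω} ⊆
        ⋃ n : ℕ, {ω | (1:ℝ)/(n+1) ≤ N.rnorm (x - y) ω} := by
      intro ω hω
      obtain ⟨n, hn⟩ := exists_nat_one_div_lt (show (0:ℝ) < _ from hω)
      exact Set.mem_iUnion.mpr ⟨n, hn.le⟩
    refine measure_mono_null hcover (measure_iUnion_null fun n => key _ ?_)
    positivity
  exact ae_iff.mpr (by simpa only [not_le] using this)

end Aux


/-- Let `(E, ‖·‖)` be a complete RN module, `G` a closed stable subset, and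
`T : G → G` a stable mapping. If there are a positive-integer-valued measurable random
variable `L` and `ξ ∈ L⁰₊(F)` with `ξ < 1` a.s. such that
`‖T^(L) x − T^(L) y‖ ≤ ξ·‖x − y‖` for all `x, y ∈ G` — expressed piecewise: a.e. on
`{L = k}`, `‖T^(k) x − T^(k) y‖ ≤ ξ·‖x − y‖` — then `T` has a unique fixed point in `G`. -/
theorem stmt6
    {Ω E : Type*} [MeasurableSpace Ω] {μ : Measure Ω} [IsProbabilityMeasure μ]
    [AddCommGroup E] [Module (Ω → ℝ) E]
    (N : RNModule Ω μ E) (hcomp : N.Complete)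
    (G : Set E) (hGc : N.IsClosedSet G) (hGs : N.StableSet G) (hGne : G.Nonempty)
    (T : E → E) (hTG : ∀ x ∈ G, T x ∈ G)
    (hTstable : ∀ g : ℕ → E, (∀ n, g n ∈ G) → ∀ A : ℕ → Set Ω, MeasPartition A →
      ∀ x ∈ G, (∀ n, indR (A n) • x = indR (A n) • g n) →
        ∀ n, indR (A n) • T x = indR (A n) • T (g n))
    (L : Ω → ℕ) (hLm : Measurable L) (hLpos : ∀ ω, 1 ≤ L ω)
    (ξ : Ω → ℝ) (hξm : Measurable ξ)
    (hξ0 : ∀ᵐ ω ∂μ, 0 ≤ ξ ω) (hξ1 : ∀ᵐ ω ∂μ, ξ ω < 1)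
    (hcontr : ∀ x ∈ G, ∀ y ∈ G, ∀ k : ℕ,
      ∀ᵐ ω ∂μ, L ω = k → N.rnorm (T^[k] x - T^[k] y) ω ≤ ξ ω * N.rnorm (x - y) ω) :
    ∃! x : E, x ∈ G ∧ T x = x := by
  classical
  set A : ℕ → Set Ω := fun k => L ⁻¹' {k} with hAdef
  have hA : MeasPartition A := by
    refine ⟨fun k => hLm (measurableSet_singleton k), ?_, ?_⟩
    · intro i j hij
      rw [Function.onFun, Set.disjoint_left]
      intro ω hi hj
      exact hij ((show L ω = i from hi).symm.trans (show L ω = j from hj))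
    · ext ω; simp only [Set.mem_iUnion, Set.mem_univ, iff_true]
      exact ⟨L ω, rfl⟩
  have hiterG : ∀ x ∈ G, ∀ k, T^[k] x ∈ G := by
    intro x hx k
    induction k with
    | zero => simpa using hx
    | succ n ih => rw [Function.iterate_succ_apply']; exact hTG _ ih
  have hSex : ∀ x ∈ G, ∃ y ∈ G, ∀ k, indR (A k) • y = indR (A k) • T^[k] x :=
    fun x hx => hGs (fun k => T^[k] x) (fun k => hiterG x hx k) A hA
  choose! S hSG hSspec using hSex
  -- contraction of S
  have hScontr : ∀ x ∈ G, ∀ y ∈ G, ∀ᵐ ω ∂μ,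
      N.rnorm (S x - S y) ω ≤ ξ ω * N.rnorm (x - y) ω := by
    intro x hx y hy
    have hk : ∀ k : ℕ, ∀ᵐ ω ∂μ, ω ∈ A k →
        N.rnorm (S x - S y) ω ≤ ξ ω * N.rnorm (x - y) ω := by
      intro k
      have e1 := N.rnorm_smul (indR (A k)) (aux_measurable_indR (hA.1 k)) (S x - S y)
      have e2 := N.rnorm_smul (indR (A k)) (aux_measurable_indR (hA.1 k))
        (T^[k] x - T^[k] y)
      filter_upwards [e1, e2, hcontr x hx y hy k] with ω h1 h2 h3 hmem
      have hi : indR (A k) ω = 1 := Set.indicator_of_mem hmem _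
      have hsm : indR (A k) • (S x - S y) = indR (A k) • (T^[k] x - T^[k] y) := by
        rw [smul_sub, smul_sub, hSspec x hx k, hSspec y hy k]
      calc N.rnorm (S x - S y) ω
          = |indR (A k) ω| * N.rnorm (S x - S y) ω := by rw [hi]; simp
        _ = N.rnorm (indR (A k) • (S x - S y)) ω := h1.symm
        _ = N.rnorm (indR (A k) • (T^[k] x - T^[k] y)) ω := by rw [hsm]
        _ = |indR (A k) ω| * N.rnorm (T^[k] x - T^[k] y) ω := h2
        _ = N.rnorm (T^[k] x - T^[k] y) ω := by rw [hi]; simp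
        _ ≤ ξ ω * N.rnorm (x - y) ω := h3 hmem
    filter_upwards [ae_all_iff.mpr hk] with ω hω
    exact hω (L ω) rfl
  -- uniqueness of fixed points of S
  have hSuniq : ∀ u ∈ G, S u = u → ∀ v ∈ G, S v = v → u = v := by
    intro u hu hSu v hv hSv
    apply aux_eq_of_rnorm_le_zero N
    filter_upwards [hScontr u hu v hv, hξ1, N.rnorm_nonneg (u - v)] with ω h1 h2 h3
    rw [hSu, hSv] at h1
    by_contra hcon
    push_neg at hcon
    have := mul_lt_mul_of_pos_right h2 hcon
    rw [one_mul] at this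
    linarith
  -- the Picard sequence
  obtain ⟨x₀, hx₀⟩ := hGne
  set seq : ℕ → E := fun n => S^[n] x₀ with hseqdef
  have hseqsucc : ∀ n, seq (n + 1) = S (seq n) := fun n =>
    Function.iterate_succ_apply' S n x₀
  have hseqG : ∀ n, seq n ∈ G := by
    intro n; induction n with
    | zero => simpa [hseqdef] using hx₀
    | succ n ih => rw [hseqsucc n]; exact hSG _ ih
  set C : Ω → ℝ := N.rnorm (seq 1 - seq 0) with hCdef
  have hstep : ∀ n, ∀ᵐ ω ∂μ,
      N.rnorm (seq (n + 1) - seq n) ω ≤ ξ ω ^ n * C ω := by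
    intro n
    induction n with
    | zero => filter_upwards with ω; simp [hCdef]
    | succ n ih =>
      have goal_eq : seq (n + 1 + 1) - seq (n + 1) = S (seq (n + 1)) - S (seq n) := by
        rw [hseqsucc (n + 1), hseqsucc n]
      filter_upwards [ih, hScontr (seq (n + 1)) (hseqG _) (seq n) (hseqG _), hξ0]
        with ω h1 h2 h3
      rw [goal_eq]
      calc N.rnorm (S (seq (n + 1)) - S (seq n)) ω
          ≤ ξ ω * N.rnorm (seq (n + 1) - seq n) ω := h2
        _ ≤ ξ ω * (ξ ω ^ n * C ω) := mul_le_mul_of_nonneg_left h1 h3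
        _ = ξ ω ^ (n + 1) * C ω := by ring
  have htel : ∀ n m, ∀ᵐ ω ∂μ, N.rnorm (seq (n + m) - seq n) ω ≤
      ((Finset.range m).sum fun j => ξ ω ^ (n + j)) * C ω := by
    intro n m
    induction m with
    | zero =>
      filter_upwards [aux_rnorm_zero N] with ω h0
      simp only [Nat.add_zero, sub_self, Finset.range_zero, Finset.sum_empty, zero_mul]
      exact le_of_eq h0
    | succ m ih =>
      have harith : n + (m + 1) = (n + m) + 1 := rfl
      filter_upwards [ih, N.rnorm_add (seq (n + m + 1) - seq (n + m)) (seq (n + m) - seq n),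
        hstep (n + m)] with ω h1 h2 h3
      have he : seq (n + (m + 1)) - seq n =
          (seq (n + m + 1) - seq (n + m)) + (seq (n + m) - seq n) := by
        rw [harith]; abel
      rw [he, Finset.sum_range_succ, add_mul]
      calc N.rnorm ((seq (n + m + 1) - seq (n + m)) + (seq (n + m) - seq n)) ω
          ≤ N.rnorm (seq (n + m + 1) - seq (n + m)) ω + N.rnorm (seq (n + m) - seq n) ω := h2
        _ ≤ ξ ω ^ (n + m) * C ω +
            ((Finset.range m).sum fun j => ξ ω ^ (n + j)) * C ω := add_le_add h3 h1
        _ = _ := by ring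
  -- the geometric majorant
  set g : Ω → ℝ := fun ω => C ω / (1 - ξ ω) with hgdef
  have hbound : ∀ n k, ∀ᵐ ω ∂μ,
      N.rnorm (seq (n + k) - seq n) ω ≤ ξ ω ^ n * g ω := by
    intro n k
    filter_upwards [htel n k, hξ0, hξ1, N.rnorm_nonneg (seq 1 - seq 0)] with ω h1 h2 h3 hC
    have h1ξ : 0 < 1 - ξ ω := by linarith
    have hsum1 : ((Finset.range k).sum fun j => ξ ω ^ (n + j)) =
        ξ ω ^ n * (Finset.range k).sum fun j => ξ ω ^ j := by
      rw [Finset.mul_sum]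
      exact Finset.sum_congr rfl fun j _ => pow_add (ξ ω) n j
    have hq : ((Finset.range k).sum fun j => ξ ω ^ j) ≤ 1 / (1 - ξ ω) := by
      rw [geom_sum_eq (ne_of_lt h3)]
      rw [show (ξ ω ^ k - 1) / (ξ ω - 1) = (1 - ξ ω ^ k) / (1 - ξ ω) by
        rw [div_eq_div_iff (by linarith) (by linarith)]; ring]
      rw [div_le_div_iff₀ h1ξ h1ξ]
      have : 0 ≤ ξ ω ^ k := pow_nonneg h2 k
      nlinarith
    calc N.rnorm (seq (n + k) - seq n) ω
        ≤ ((Finset.range k).sum fun j => ξ ω ^ (n + j)) * C ω := h1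
      _ = ξ ω ^ n * ((Finset.range k).sum fun j => ξ ω ^ j) * C ω := by rw [hsum1]
      _ ≤ ξ ω ^ n * (1 / (1 - ξ ω)) * C ω := by
          apply mul_le_mul_of_nonneg_right _ hC
          exact mul_le_mul_of_nonneg_left hq (pow_nonneg h2 n)
      _ = ξ ω ^ n * g ω := by rw [hgdef]; ring
  -- tendsto in measure of the majorant
  have hgmeas : Measurable g := (N.measurable_rnorm _).div (measurable_const.sub hξm)
  have hfmeas : ∀ n : ℕ, Measurable fun ω => ξ ω ^ n * g ω :=
    fun n => (hξm.pow_const n).mul hgmeas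
  have hf0 : ∀ᵐ ω ∂μ, Tendsto (fun n => ξ ω ^ n * g ω) atTop (nhds 0) := by
    filter_upwards [hξ0, hξ1] with ω h0 h1
    have := tendsto_pow_atTop_nhds_zero_of_lt_one h0 h1
    simpa using this.mul_const (g ω)
  have hTIM : MeasureTheory.TendstoInMeasure μ (fun n ω => ξ ω ^ n * g ω) atTop 0 :=
    MeasureTheory.tendstoInMeasure_of_tendsto_ae
      (fun n => (hfmeas n).aestronglyMeasurable) hf0
  -- Cauchy in probability
  have hcauchy : N.CauchyInProb seq := by
    intro ε hε δ hδ
    have h1 := MeasureTheory.tendstoInMeasure_iff_dist.mp hTIM ε hε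
    have h2 : ∀ᶠ n in atTop,
        μ {ω | ε ≤ dist (ξ ω ^ n * g ω) ((0 : ℕ → Ω → ℝ) n ω)} < ENNReal.ofReal δ :=
      h1.eventually_lt_const (by simp [hδ])
    obtain ⟨K, hK⟩ := eventually_atTop.mp h2
    refine ⟨K, ?_⟩
    have main : ∀ p q : ℕ, K ≤ p → p ≤ q →
        μ {ω | ε ≤ N.rnorm (seq q - seq p) ω} ≤ ENNReal.ofReal δ := by
      intro p q hp hpq
      have hb := hbound p (q - p)
      rw [show p + (q - p) = q by omega] at hb
      have hsub : {ω | ε ≤ N.rnorm (seq q - seq p) ω} ≤ᵐ[μ]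
          {ω | ε ≤ dist (ξ ω ^ p * g ω) ((0 : ℕ → Ω → ℝ) p ω)} := by
        filter_upwards [hb] with ω h hmem
        have hε2 : ε ≤ ξ ω ^ p * g ω := le_trans hmem h
        show ε ≤ dist (ξ ω ^ p * g ω) 0
        rw [Real.dist_eq, sub_zero]
        exact hε2.trans (le_abs_self _)
      exact le_trans (measure_mono_ae hsub) (hK p hp).le
    intro m hm n hn
    rcases le_total n m with h | h
    · exact main n m hn h
    · have hneg := aux_rnorm_neg N (seq n - seq m)
      have hsub : {ω | ε ≤ N.rnorm (seq m - seq n) ω} ≤ᵐ[μ]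
          {ω | ε ≤ N.rnorm (seq n - seq m) ω} := by
        filter_upwards [hneg] with ω hω hmem
        show ε ≤ N.rnorm (seq n - seq m) ω
        have he : -(seq n - seq m) = seq m - seq n := by abel
        rw [he] at hω
        exact le_trans (show ε ≤ N.rnorm (seq m - seq n) ω from hmem) hω.le
      exact le_trans (measure_mono_ae hsub) (main m n hm h)
  -- limit
  obtain ⟨xstar, hxstar⟩ := hcomp seq hcauchy
  have hxG : xstar ∈ G := hGc seq xstar hseqG hxstar
  have hxshift : N.TendstoInProb (fun n => seq (n + 1)) xstar := by
    intro ε hε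
    exact (hxstar ε hε).comp (tendsto_add_atTop_nat 1)
  have hSx : N.TendstoInProb (fun n => seq (n + 1)) (S xstar) := by
    intro ε hε
    have hb : ∀ n, μ {ω | ε ≤ N.rnorm (seq (n + 1) - S xstar) ω} ≤
        μ {ω | ε ≤ N.rnorm (seq n - xstar) ω} := by
      intro n
      apply measure_mono_ae
      filter_upwards [hScontr (seq n) (hseqG n) xstar hxG, hξ0, hξ1,
        N.rnorm_nonneg (seq n - xstar)] with ω h1 h2 h3 h4 hmem
      have hmem' : ε ≤ N.rnorm (seq (n + 1) - S xstar) ω := hmem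
      rw [hseqsucc n] at hmem'
      show ε ≤ N.rnorm (seq n - xstar) ω
      have hle : N.rnorm (S (seq n) - S xstar) ω ≤ N.rnorm (seq n - xstar) ω :=
        calc N.rnorm (S (seq n) - S xstar) ω
            ≤ ξ ω * N.rnorm (seq n - xstar) ω := h1
          _ ≤ 1 * N.rnorm (seq n - xstar) ω := mul_le_mul_of_nonneg_right h3.le h4
          _ = _ := one_mul _
      linarith
    exact tendsto_of_tendsto_of_tendsto_of_le_of_le tendsto_const_nhds (hxstar ε hε)
      (fun n => zero_le) hb
  have hfix : S xstar = xstar := aux_tendstoInProb_unique N hSx hxshift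
  -- T commutes with S on G
  have hcomm : ∀ x ∈ G, S (T x) = T (S x) := by
    intro x hx
    apply aux_concat_unique N hA
    intro k
    have h2 := hTstable (fun k => T^[k] x) (fun k => hiterG x hx k) A hA (S x)
      (hSG x hx) (hSspec x hx) k
    rw [hSspec (T x) (hTG x hx) k, h2]
    rw [← Function.iterate_succ_apply,
      show T^[k.succ] x = T (T^[k] x) from Function.iterate_succ_apply' T k x]
  have hTfix : T xstar = xstar := by
    have h1 : S (T xstar) = T xstar := by rw [hcomm xstar hxG, hfix]
    exact hSuniq (T xstar) (hTG _ hxG) h1 xstar hxG hfix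
  refine ⟨xstar, ⟨hxG, hTfix⟩, ?_⟩
  rintro y ⟨hyG, hyfix⟩
  have hSy : S y = y := by
    apply aux_concat_unique N hA
    intro k
    rw [hSspec y hyG k, Function.iterate_fixed hyfix k]
  exact hSuniq y hyG hSy xstar hxG hfix
end

section
/- Let (E, ‖·‖) be a complete RN module over K with base (Ω, F, P) such that E has full support and is random uniformly convex. Then every closed L⁰-convex subset G of E has random normal structure: for each a.s. bounded closed L⁰-convex subset H of G with random diameter D(H) := ⋁{‖x−y‖ : x,y ∈ H} > 0, there exists h ∈ H with ⋁{‖h−x‖ : x ∈ H} < D(H) on the set where D(H) > 0. -/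
open MeasureTheory Filter Function Set

/- ## Auxiliary lemmas -/

section IndRAux
variable {Ω : Type*} {A B : Set Ω}

lemma indR_mem {ω : Ω} (h : ω ∈ A) : indR A ω = 1 := by simp [indR, h]
lemma indR_not_mem {ω : Ω} (h : ω ∉ A) : indR A ω = 0 := by simp [indR, h]
lemma indR_nonneg (ω : Ω) : 0 ≤ indR A ω := by
  by_cases h : ω ∈ A <;> simp [indR_mem, indR_not_mem, h]
lemma indR_le_one (ω : Ω) : indR A ω ≤ 1 := by
  by_cases h : ω ∈ A <;> simp [indR_mem, indR_not_mem, h]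
lemma abs_indR (ω : Ω) : |indR A ω| = indR A ω := abs_of_nonneg (indR_nonneg ω)

lemma measurable_indR [MeasurableSpace Ω] (hA : MeasurableSet A) : Measurable (indR A) :=
  measurable_const.indicator hA

lemma one_sub_indR (A : Set Ω) : (1 : Ω → ℝ) - indR A = indR Aᶜ := by
  funext ω; by_cases h : ω ∈ A <;>
    simp [indR_mem, indR_not_mem, h, Pi.sub_apply]

lemma indR_mul_indR (A B : Set Ω) : indR A * indR B = indR (A ∩ B) := by
  funext ω; by_cases hA : ω ∈ A <;> by_cases hB : ω ∈ B <;>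
    simp [indR_mem, indR_not_mem, hA, hB, Set.mem_inter_iff, Pi.mul_apply]

lemma indR_empty : indR (∅ : Set Ω) = 0 := by
  funext ω; simp [indR]

lemma indR_add_compl (A : Set Ω) : indR A + indR Aᶜ = 1 := by
  funext ω; by_cases h : ω ∈ A <;>
    simp [indR_mem, indR_not_mem, h, Pi.add_apply]

end IndRAux

section ModAux
variable {Ω E : Type*} [AddCommGroup E] [Module (Ω → ℝ) E]

lemma indR_smul_concat_left {A B : Set Ω} (h : B ⊆ A) (x y : E) :
    indR B • (indR A • x + indR Aᶜ • y) = indR B • x := by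
  rw [smul_add, ← mul_smul, ← mul_smul, indR_mul_indR, indR_mul_indR,
    Set.inter_eq_left.mpr h]
  have hBA : B ∩ Aᶜ = ∅ := by
    ext ω; simp only [Set.mem_inter_iff, Set.mem_compl_iff, Set.mem_empty_iff_false,
      iff_false, not_and, not_not]
    exact fun hb => h hb
  rw [hBA, indR_empty, zero_smul, add_zero]

lemma indR_smul_concat_right {A B : Set Ω} (h : B ⊆ Aᶜ) (x y : E) :
    indR B • (indR A • x + indR Aᶜ • y) = indR B • y := by
  rw [smul_add, ← mul_smul, ← mul_smul, indR_mul_indR, indR_mul_indR,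
    Set.inter_eq_left.mpr h]
  have hBA : B ∩ A = ∅ := by
    ext ω; simp only [Set.mem_inter_iff, Set.mem_empty_iff_false, iff_false, not_and]
    exact fun hb ha => h hb ha
  rw [hBA, indR_empty, zero_smul, zero_add]

lemma concat_sub {A : Set Ω} (x1 x2 y1 y2 : E) :
    (indR A • x1 + indR Aᶜ • x2) - (indR A • y1 + indR Aᶜ • y2)
      = indR A • (x1 - y1) + indR Aᶜ • (x2 - y2) := by
  rw [smul_sub, smul_sub]; abel

end ModAux

namespace RNModule

variable {Ω E : Type*} [MeasurableSpace Ω] {μ : Measure Ω} [IsProbabilityMeasure μ]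
  [AddCommGroup E] [Module (Ω → ℝ) E] (N : RNModule Ω μ E)

lemma rnorm_zero : N.rnorm (0 : E) =ᵐ[μ] 0 := by
  have h := N.rnorm_smul 0 measurable_const (0 : E)
  rw [zero_smul] at h
  filter_upwards [h] with ω hω
  simpa using hω

lemma rnorm_neg (x : E) : N.rnorm (-x) =ᵐ[μ] N.rnorm x := by
  have h := N.rnorm_smul (fun _ => (-1:ℝ)) measurable_const x
  have e : (fun _ : Ω => (-1:ℝ)) = (-1 : Ω → ℝ) := rfl
  rw [e, neg_one_smul] at h
  filter_upwards [h] with ω hω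
  simpa using hω

lemma rnorm_sub_comm (x y : E) : N.rnorm (x - y) =ᵐ[μ] N.rnorm (y - x) := by
  have h := N.rnorm_neg (y - x)
  rw [neg_sub] at h
  exact h

lemma rnorm_indR_smul {A : Set Ω} (hA : MeasurableSet A) (x : E) :
    N.rnorm (indR A • x) =ᵐ[μ] fun ω => indR A ω * N.rnorm x ω := by
  filter_upwards [N.rnorm_smul _ (measurable_indR hA) x] with ω h
  rw [h, abs_indR]

lemma rnorm_concat {A : Set Ω} (hA : MeasurableSet A) (w1 w2 : E) :
    ∀ᵐ ω ∂μ, (ω ∈ A → N.rnorm (indR A • w1 + indR Aᶜ • w2) ω = N.rnorm w1 ω) ∧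
      (ω ∉ A → N.rnorm (indR A • w1 + indR Aᶜ • w2) ω = N.rnorm w2 ω) := by
  set z := indR A • w1 + indR Aᶜ • w2 with hz
  have h1 : indR A • z = indR A • w1 := indR_smul_concat_left subset_rfl w1 w2
  have h2 : indR Aᶜ • z = indR Aᶜ • w2 := indR_smul_concat_right subset_rfl w1 w2
  filter_upwards [N.rnorm_indR_smul hA z, N.rnorm_indR_smul hA w1,
    N.rnorm_indR_smul hA.compl z, N.rnorm_indR_smul hA.compl w2] with ω e1 e2 e3 e4
  constructor
  · intro hω
    have key : indR A ω * N.rnorm z ω = indR A ω * N.rnorm w1 ω := by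
      rw [← e1, h1, e2]
    simpa [indR_mem hω] using key
  · intro hω
    have key : indR Aᶜ ω * N.rnorm z ω = indR Aᶜ ω * N.rnorm w2 ω := by
      rw [← e3, h2, e4]
    simpa [indR_mem (Set.mem_compl hω)] using key

lemma eq_zero_of_rnorm_levels (w : E)
    (h : ∀ ε : ℝ, 0 < ε → μ {ω | ε ≤ N.rnorm w ω} = 0) : w = 0 := by
  apply N.rnorm_eq_zero
  have hnull : μ {ω | 0 < N.rnorm w ω} = 0 := by
    have hsub : {ω | 0 < N.rnorm w ω} ⊆ ⋃ k : ℕ, {ω | (1:ℝ)/(k+1) ≤ N.rnorm w ω} := by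
      intro ω hω
      simp only [Set.mem_setOf_eq] at hω
      obtain ⟨k, hk⟩ := exists_nat_one_div_lt hω
      exact Set.mem_iUnion.mpr ⟨k, le_of_lt hk⟩
    refine le_antisymm ?_ zero_le
    calc μ {ω | 0 < N.rnorm w ω} ≤ μ (⋃ k : ℕ, {ω | (1:ℝ)/(k+1) ≤ N.rnorm w ω}) :=
        measure_mono hsub
      _ ≤ ∑' k : ℕ, μ {ω | (1:ℝ)/(k+1) ≤ N.rnorm w ω} := measure_iUnion_le _
      _ = 0 := by
          refine ENNReal.tsum_eq_zero.mpr fun k => h _ (by positivity)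
  have h1 : ∀ᵐ ω ∂μ, ω ∉ {ω | 0 < N.rnorm w ω} := (measure_eq_zero_iff_ae_notMem).mp hnull
  filter_upwards [N.rnorm_nonneg w, h1] with ω h2 h3
  simp only [Set.mem_setOf_eq, not_lt] at h3
  exact le_antisymm h3 h2

lemma limit_piece (f : ℕ → E) (x : E) (hx : N.TendstoInProb f x) (w : E) (n0 : ℕ)
    (hw : ∀ m, n0 ≤ m → ∀ᵐ ω ∂μ, N.rnorm w ω ≤ N.rnorm (f m - x) ω) : w = 0 := by
  apply N.eq_zero_of_rnorm_levels
  intro ε hε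
  have key : ∀ m, n0 ≤ m →
      μ {ω | ε ≤ N.rnorm w ω} ≤ μ {ω | ε ≤ N.rnorm (f m - x) ω} := by
    intro m hm
    have hae := hw m hm
    rw [ae_iff] at hae
    have hnull : μ {ω | ¬ N.rnorm w ω ≤ N.rnorm (f m - x) ω} = 0 := hae
    have hsub : {ω | ε ≤ N.rnorm w ω} ⊆
        {ω | ε ≤ N.rnorm (f m - x) ω} ∪ {ω | ¬ N.rnorm w ω ≤ N.rnorm (f m - x) ω} := by
      intro ω hω
      by_cases hc : N.rnorm w ω ≤ N.rnorm (f m - x) ω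
      · exact Or.inl (le_trans hω hc)
      · exact Or.inr hc
    calc μ {ω | ε ≤ N.rnorm w ω} ≤ _ := measure_mono hsub
      _ ≤ μ {ω | ε ≤ N.rnorm (f m - x) ω} + μ {ω | ¬ N.rnorm w ω ≤ N.rnorm (f m - x) ω} :=
          measure_union_le _ _
      _ = μ {ω | ε ≤ N.rnorm (f m - x) ω} := by rw [hnull, add_zero]
  refine le_antisymm ?_ zero_le
  exact ge_of_tendsto (hx ε hε) (Filter.eventually_atTop.mpr ⟨n0, key⟩)

end RNModule

namespace RNModule

variable {Ω E : Type*} [MeasurableSpace Ω] {μ : Measure Ω} [IsProbabilityMeasure μ]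
  [AddCommGroup E] [Module (Ω → ℝ) E] (N : RNModule Ω μ E)

/-- Partial concatenations of a sequence along an increasing family of sets. -/
noncomputable def cseq (g : ℕ → E) (B : ℕ → Set Ω) : ℕ → E :=
  fun n => Nat.rec (g 0) (fun n prev => indR (B n) • prev + indR (B n)ᶜ • g (n + 1)) n

lemma cseq_zero (g : ℕ → E) (B : ℕ → Set Ω) : cseq g B 0 = g 0 := rfl

lemma cseq_succ (g : ℕ → E) (B : ℕ → Set Ω) (n : ℕ) :
    cseq g B (n + 1) = indR (B n) • cseq g B n + indR (B n)ᶜ • g (n + 1) := rfl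

lemma cseq_mem {H : Set E} (hconv : N.L0Convex H) (g : ℕ → E) (hg : ∀ n, g n ∈ H)
    {B : ℕ → Set Ω} (hB : ∀ n, MeasurableSet (B n)) : ∀ n, cseq g B n ∈ H := by
  intro n
  induction n with
  | zero => exact hg 0
  | succ n ih =>
    have h := hconv _ ih _ (hg (n + 1)) (indR (B n)) (measurable_indR (hB n))
      indR_nonneg indR_le_one
    rw [one_sub_indR] at h
    rw [cseq_succ]
    exact h
    
lemma indR_smul_cseq (g : ℕ → E) {B : ℕ → Set Ω} (hmono : Monotone B) :
    ∀ n m, n ≤ m → indR (B n) • cseq g B m = indR (B n) • cseq g B n := by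
  intro n m hnm
  induction m with
  | zero => 
    have : n = 0 := Nat.le_zero.mp hnm
    subst this; rfl
  | succ m ih =>
    rcases Nat.lt_or_ge n (m + 1) with hlt | hge
    · have hnm' : n ≤ m := Nat.lt_succ_iff.mp hlt
      rw [cseq_succ, indR_smul_concat_left (hmono hnm') _ _, ih hnm']
    · have : n = m + 1 := le_antisymm hnm hge
      subst this; rfl

/-- The countable concatenation lemma: in a complete RN module, a closed `L⁰`-convex set
contains the concatenation of any sequence of its elements along an increasing family of
measurable sets whose complements have measure tending to zero. -/
lemma concat_exists (hcomp : N.Complete) {H : Set E} (hconv : N.L0Convex H)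
    (hcl : N.IsClosedSet H) (g : ℕ → E) (hg : ∀ n, g n ∈ H)
    {B : ℕ → Set Ω} (hB : ∀ n, MeasurableSet (B n)) (hmono : Monotone B)
    (hμ : Tendsto (fun n => μ (B n)ᶜ) atTop (nhds 0)) :
    ∃ u ∈ H, ∀ n, indR (B n) • u = indR (B n) • cseq g B n := by
  -- the partial concatenations form a Cauchy sequence
  have hdiff : ∀ K m n, K ≤ m → K ≤ n →
      ∀ᵐ ω ∂μ, ω ∈ B K → N.rnorm (cseq g B m - cseq g B n) ω = 0 := by
    intro K m n hm hn
    have h1 : indR (B K) • (cseq g B m - cseq g B n) = 0 := by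
      rw [smul_sub, indR_smul_cseq g hmono K m hm, indR_smul_cseq g hmono K n hn, sub_self]
    filter_upwards [N.rnorm_indR_smul (hB K) (cseq g B m - cseq g B n),
      N.rnorm_zero] with ω e1 e2
    intro hω
    have : N.rnorm (indR (B K) • (cseq g B m - cseq g B n)) ω = 0 := by
      rw [h1]; exact e2
    rw [e1] at this
    simpa [indR_mem hω] using this
  have hcauchy : N.CauchyInProb (cseq g B) := by
    intro ε hε δ hδ
    obtain ⟨K, hK⟩ := (ENNReal.tendsto_atTop_zero.mp hμ) (ENNReal.ofReal δ)
      (ENNReal.ofReal_pos.mpr hδ)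
    refine ⟨K, fun m hm n hn => ?_⟩
    have hae := hdiff K m n hm hn
    rw [ae_iff] at hae
    have hsub : {ω | ε ≤ N.rnorm (cseq g B m - cseq g B n) ω} ⊆
        (B K)ᶜ ∪ {ω | ¬(ω ∈ B K → N.rnorm (cseq g B m - cseq g B n) ω = 0)} := by
      intro ω hω
      by_cases hc : ω ∈ B K
      · by_cases hz : N.rnorm (cseq g B m - cseq g B n) ω = 0
        · exfalso
          simp only [Set.mem_setOf_eq, hz] at hω
          linarith
        · exact Or.inr (by simp [hc, hz])
      · exact Or.inl hc
    calc μ {ω | ε ≤ N.rnorm (cseq g B m - cseq g B n) ω} ≤ _ := measure_mono hsub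
      _ ≤ μ (B K)ᶜ + _ := measure_union_le _ _
      _ = μ (B K)ᶜ := by rw [hae, add_zero]
      _ ≤ ENNReal.ofReal δ := hK K le_rfl
  obtain ⟨u, hu⟩ := hcomp _ hcauchy
  refine ⟨u, hcl _ u (N.cseq_mem hconv g hg hB) hu, fun n => ?_⟩
  have key : indR (B n) • u - indR (B n) • cseq g B n = 0 := by
    refine N.limit_piece (cseq g B) u hu _ n (fun m hm => ?_)
    have h1 : indR (B n) • (cseq g B m - u) =
        -(indR (B n) • u - indR (B n) • cseq g B n) := by
      rw [smul_sub, indR_smul_cseq g hmono n m hm]; abel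
    filter_upwards [N.rnorm_indR_smul (hB n) (cseq g B m - u),
      N.rnorm_neg (indR (B n) • u - indR (B n) • cseq g B n),
      N.rnorm_nonneg (cseq g B m - u)] with ω e1 e2 e3
    have e4 : N.rnorm (indR (B n) • u - indR (B n) • cseq g B n) ω =
        indR (B n) ω * N.rnorm (cseq g B m - u) ω := by
      rw [← e2, ← h1, e1]
    rw [e4]
    calc indR (B n) ω * N.rnorm (cseq g B m - u) ω
        ≤ 1 * N.rnorm (cseq g B m - u) ω := by
          exact mul_le_mul_of_nonneg_right (indR_le_one ω) e3
      _ = _ := one_mul _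
  exact sub_eq_zero.mp key

end RNModule

namespace RNModule

variable {Ω E : Type*} [MeasurableSpace Ω] {μ : Measure Ω} [IsProbabilityMeasure μ]
  [AddCommGroup E] [Module (Ω → ℝ) E] (N : RNModule Ω μ E)

/-- The set where the first pair has larger difference-norm than the second one. -/
def maxSet (x y : E × E) : Set Ω :=
  {ω | N.rnorm (y.1 - y.2) ω ≤ N.rnorm (x.1 - x.2) ω}

lemma maxSet_measurable (x y : E × E) : MeasurableSet (N.maxSet x y) :=
  measurableSet_le (N.measurable_rnorm _) (N.measurable_rnorm _)

/-- Concatenating two pairs so that the difference-norm becomes the max of the two. -/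
noncomputable def maxPair (x y : E × E) : E × E :=
  (indR (N.maxSet x y) • x.1 + indR (N.maxSet x y)ᶜ • y.1,
   indR (N.maxSet x y) • x.2 + indR (N.maxSet x y)ᶜ • y.2)

lemma maxPair_mem {H : Set E} (hconv : N.L0Convex H) {x y : E × E}
    (hx1 : x.1 ∈ H) (hx2 : x.2 ∈ H) (hy1 : y.1 ∈ H) (hy2 : y.2 ∈ H) :
    (N.maxPair x y).1 ∈ H ∧ (N.maxPair x y).2 ∈ H := by
  constructor
  · have h := hconv _ hx1 _ hy1 (indR (N.maxSet x y))
      (measurable_indR (N.maxSet_measurable x y)) indR_nonneg indR_le_one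
    rwa [one_sub_indR] at h
  · have h := hconv _ hx2 _ hy2 (indR (N.maxSet x y))
      (measurable_indR (N.maxSet_measurable x y)) indR_nonneg indR_le_one
    rwa [one_sub_indR] at h

lemma rnorm_maxPair (x y : E × E) :
    ∀ᵐ ω ∂μ, N.rnorm ((N.maxPair x y).1 - (N.maxPair x y).2) ω
      = max (N.rnorm (x.1 - x.2) ω) (N.rnorm (y.1 - y.2) ω) := by
  have hdiff : (N.maxPair x y).1 - (N.maxPair x y).2 =
      indR (N.maxSet x y) • (x.1 - x.2) + indR (N.maxSet x y)ᶜ • (y.1 - y.2) :=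
    concat_sub _ _ _ _
  filter_upwards [N.rnorm_concat (N.maxSet_measurable x y) (x.1 - x.2) (y.1 - y.2)]
    with ω h
  rw [hdiff]
  by_cases hω : ω ∈ N.maxSet x y
  · rw [h.1 hω, max_eq_left hω]
  · rw [h.2 hω, max_eq_right (le_of_lt (not_le.mp hω))]

/-- The sequence of iterated maxima of a sequence of pairs. -/
noncomputable def maxSeq (p : ℕ → E × E) : ℕ → E × E :=
  fun n => Nat.rec (p 0) (fun n prev => N.maxPair prev (p (n + 1))) n

lemma maxSeq_zero (p : ℕ → E × E) : N.maxSeq p 0 = p 0 := rfl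

lemma maxSeq_succ (p : ℕ → E × E) (n : ℕ) :
    N.maxSeq p (n + 1) = N.maxPair (N.maxSeq p n) (p (n + 1)) := rfl

lemma rnorm_sub_le_add (a b : E) :
    ∀ᵐ ω ∂μ, N.rnorm (a - b) ω ≤ N.rnorm a ω + N.rnorm b ω := by
  have h : a - b = a + -b := sub_eq_add_neg a b
  filter_upwards [N.rnorm_add a (-b), N.rnorm_neg b] with ω h1 h2
  rw [h]
  calc N.rnorm (a + -b) ω ≤ N.rnorm a ω + N.rnorm (-b) ω := h1
    _ = N.rnorm a ω + N.rnorm b ω := by rw [h2]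

end RNModule

namespace RNModule

variable {Ω E : Type*} [MeasurableSpace Ω] {μ : Measure Ω} [IsProbabilityMeasure μ]
  [AddCommGroup E] [Module (Ω → ℝ) E] (N : RNModule Ω μ E)

open Real ENNReal

/-- There is a pair of points of `H` whose mutual distance is at least half of the random
diameter, almost everywhere. -/
lemma exists_diam_pair (hcomp : N.Complete) {H : Set E} (hne : H.Nonempty)
    (hconv : N.L0Convex H) (hcl : N.IsClosedSet H) (hbdd : N.AeBounded H)
    {D : Ω → ℝ} (hD : N.IsRandomDiam H D) :
    ∃ u ∈ H, ∃ v ∈ H, ∀ᵐ ω ∂μ, D ω ≤ 2 * N.rnorm (u - v) ω := by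
  obtain ⟨hDmeas, hDub, hDmin⟩ := hD
  obtain ⟨η, hηm, hη⟩ := hbdd
  obtain ⟨h0, hh0⟩ := hne
  set J : E → E → ℝ≥0∞ :=
    fun a b => ∫⁻ ω, ENNReal.ofReal (arctan (N.rnorm (a - b) ω) + 2) ∂μ with hJdef
  have hintm : ∀ a b : E,
      Measurable fun ω => ENNReal.ofReal (arctan (N.rnorm (a - b) ω) + 2) := fun a b =>
    ((continuous_arctan.measurable.comp (N.measurable_rnorm (a - b))).add
      measurable_const).ennreal_ofReal
  have harctan_nonneg : ∀ t : ℝ, 0 ≤ arctan t + 2 := by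
    intro t
    have h1 := neg_pi_div_two_lt_arctan t
    have h2 := pi_le_four
    linarith
  have hJle : ∀ a b : E, J a b ≤ ENNReal.ofReal (π / 2 + 2) := by
    intro a b
    calc J a b ≤ ∫⁻ _, ENNReal.ofReal (π / 2 + 2) ∂μ := by
          refine lintegral_mono fun ω => ENNReal.ofReal_le_ofReal ?_
          have := arctan_lt_pi_div_two (N.rnorm (a - b) ω)
          linarith
      _ = ENNReal.ofReal (π / 2 + 2) := by
          rw [lintegral_const, measure_univ, mul_one]
  have hJtop : ∀ a b : E, J a b ≠ ⊤ := fun a b =>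
    ne_top_of_le_ne_top ENNReal.ofReal_ne_top (hJle a b)
  have hJmono : ∀ a b a' b' : E,
      (∀ᵐ ω ∂μ, N.rnorm (a - b) ω ≤ N.rnorm (a' - b') ω) → J a b ≤ J a' b' := by
    intro a b a' b' h
    refine lintegral_mono_ae ?_
    filter_upwards [h] with ω hω
    exact ENNReal.ofReal_le_ofReal (by linarith [arctan_strictMono.monotone hω])
  set c : ℝ≥0∞ := ⨆ (p : E × E) (_ : p.1 ∈ H ∧ p.2 ∈ H), J p.1 p.2 with hcdef
  have hcle : c ≤ ENNReal.ofReal (π / 2 + 2) :=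
    iSup_le fun p => iSup_le fun _ => hJle _ _
  have hctop : c ≠ ⊤ := ne_top_of_le_ne_top ENNReal.ofReal_ne_top hcle
  have hc0 : c ≠ 0 := by
    have h1 : ENNReal.ofReal (2 - π / 2) ≤ J h0 h0 := by
      calc ENNReal.ofReal (2 - π / 2) = ∫⁻ _, ENNReal.ofReal (2 - π / 2) ∂μ := by
            rw [lintegral_const, measure_univ, mul_one]
        _ ≤ J h0 h0 := by
            refine lintegral_mono fun ω => ENNReal.ofReal_le_ofReal ?_
            have := neg_pi_div_two_lt_arctan (N.rnorm (h0 - h0) ω)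
            linarith
    have h2 : ENNReal.ofReal (2 - π / 2) ≤ c :=
      le_trans h1 (le_iSup_of_le (h0, h0) (le_iSup_of_le ⟨hh0, hh0⟩ le_rfl))
    have h3 : (0 : ℝ≥0∞) < ENNReal.ofReal (2 - π / 2) := by
      rw [ENNReal.ofReal_pos]
      have := pi_lt_d2
      linarith
    exact (lt_of_lt_of_le h3 h2).ne'
  have hchoice : ∀ n : ℕ, ∃ p : E × E, (p.1 ∈ H ∧ p.2 ∈ H) ∧
      c - ((n : ℝ≥0∞) + 1)⁻¹ < J p.1 p.2 := by
    intro n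
    have hlt : c - ((n : ℝ≥0∞) + 1)⁻¹ < c := by
      refine ENNReal.sub_lt_self hctop hc0 ?_
      refine ENNReal.inv_ne_zero.mpr ?_
      simp
    rw [hcdef] at hlt
    rw [lt_iSup_iff] at hlt
    obtain ⟨p, hp⟩ := hlt
    rw [lt_iSup_iff] at hp
    obtain ⟨hmem, hJp⟩ := hp
    exact ⟨p, hmem, hJp⟩
  choose p hpmem hpJ using hchoice
  set q : ℕ → E × E := N.maxSeq p with hqdef
  set g : ℕ → Ω → ℝ := fun n => N.rnorm ((q n).1 - (q n).2) with hgdef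
  have hgm : ∀ n, Measurable (g n) := fun n => N.measurable_rnorm _
  have hqmem : ∀ n, (q n).1 ∈ H ∧ (q n).2 ∈ H := by
    intro n
    induction n with
    | zero => exact hpmem 0
    | succ n ih =>
      exact N.maxPair_mem hconv ih.1 ih.2 (hpmem (n + 1)).1 (hpmem (n + 1)).2
  have hgmax : ∀ n, ∀ᵐ ω ∂μ, g (n + 1) ω
      = max (g n ω) (N.rnorm ((p (n + 1)).1 - (p (n + 1)).2) ω) :=
    fun n => N.rnorm_maxPair (q n) (p (n + 1))
  have hgmono : ∀ n, ∀ᵐ ω ∂μ, g n ω ≤ g (n + 1) ω := by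
    intro n
    filter_upwards [hgmax n] with ω h
    rw [h]; exact le_max_left _ _
  have hgep : ∀ n, ∀ᵐ ω ∂μ, N.rnorm ((p n).1 - (p n).2) ω ≤ g n ω := by
    intro n
    cases n with
    | zero => filter_upwards [] with ω; exact le_rfl
    | succ n =>
      filter_upwards [hgmax n] with ω h
      rw [h]; exact le_max_right _ _
  have hJqc : ∀ n, J (q n).1 (q n).2 ≤ c :=
    fun n => le_iSup_of_le (q n) (le_iSup_of_le (hqmem n) le_rfl)
  have hJqlb : ∀ n : ℕ, c - ((n : ℝ≥0∞) + 1)⁻¹ < J (q n).1 (q n).2 :=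
    fun n => lt_of_lt_of_le (hpJ n) (hJmono _ _ _ _ (hgep n))
  have hg0 : ∀ n, ∀ᵐ ω ∂μ, 0 ≤ g n ω := fun n => N.rnorm_nonneg _
  have hgbd : ∀ n, ∀ᵐ ω ∂μ, g n ω ≤ 2 * η ω := by
    intro n
    filter_upwards [N.rnorm_sub_le_add (q n).1 (q n).2, hη _ (hqmem n).1, hη _ (hqmem n).2]
      with ω h1 h2 h3
    calc g n ω ≤ N.rnorm (q n).1 ω + N.rnorm (q n).2 ω := h1
      _ ≤ η ω + η ω := add_le_add h2 h3
      _ = 2 * η ω := by ring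
  set ginf : Ω → ℝ := fun ω => (⨆ n, ENNReal.ofReal (g n ω)).toReal with hginfdef
  have hginfm : Measurable ginf :=
    (Measurable.iSup fun n => (hgm n).ennreal_ofReal).ennreal_toReal
  have hgood : ∀ᵐ ω ∂μ, (∀ n, 0 ≤ g n ω) ∧ (∀ n, g n ω ≤ g (n + 1) ω) ∧
      (∀ n, g n ω ≤ 2 * η ω) :=
    ((ae_all_iff.mpr hg0).and ((ae_all_iff.mpr hgmono).and (ae_all_iff.mpr hgbd)))
  have hkey : ∀ᵐ ω ∂μ, Tendsto (fun n => g n ω) atTop (nhds (ginf ω)) ∧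
      (∀ n, g n ω ≤ ginf ω) ∧ Monotone fun n => g n ω := by
    filter_upwards [hgood] with ω hω
    obtain ⟨hnn, hmo, hbd⟩ := hω
    have hmono' : Monotone fun n => ENNReal.ofReal (g n ω) :=
      monotone_nat_of_le_succ fun n => ENNReal.ofReal_le_ofReal (hmo n)
    have hmonog : Monotone fun n => g n ω := monotone_nat_of_le_succ hmo
    have hTtop : (⨆ n, ENNReal.ofReal (g n ω)) ≠ ⊤ :=
      ne_top_of_le_ne_top ENNReal.ofReal_ne_top
        (iSup_le fun n => ENNReal.ofReal_le_ofReal (hbd n))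
    have h1 : Tendsto (fun n => ENNReal.ofReal (g n ω)) atTop
        (nhds (⨆ n, ENNReal.ofReal (g n ω))) := tendsto_atTop_iSup hmono'
    have h2 : Tendsto (fun n => (ENNReal.ofReal (g n ω)).toReal) atTop
        (nhds (ginf ω)) := (ENNReal.tendsto_toReal hTtop).comp h1
    have h3 : ∀ n, (ENNReal.ofReal (g n ω)).toReal = g n ω :=
      fun n => ENNReal.toReal_ofReal (hnn n)
    refine ⟨?_, fun n => ?_, hmonog⟩
    · have : (fun n => (ENNReal.ofReal (g n ω)).toReal) = fun n => g n ω := by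
        funext n; exact h3 n
      rwa [this] at h2
    · have h4 : ENNReal.ofReal (g n ω) ≤ ⨆ n, ENNReal.ofReal (g n ω) := le_iSup (fun n => ENNReal.ofReal (g n ω)) n
      have h5 := ENNReal.toReal_mono hTtop h4
      rwa [h3 n] at h5
  -- monotone convergence: the integral of the limit is `c`
  have hsupc : (⨆ n, J (q n).1 (q n).2) = c := by
    refine le_antisymm (iSup_le hJqc) (le_of_forall_lt fun b hb => ?_)
    obtain ⟨k, hk⟩ := ENNReal.exists_inv_nat_lt (tsub_pos_of_lt hb).ne'
    have hinv : ((k : ℝ≥0∞) + 1)⁻¹ ≤ (k : ℝ≥0∞)⁻¹ :=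
      ENNReal.inv_le_inv.mpr le_self_add
    have h1 : b + (k : ℝ≥0∞)⁻¹ < c := by
      have := lt_tsub_iff_right.mp hk
      rwa [add_comm] at this
    have h2 : b < c - (k : ℝ≥0∞)⁻¹ := lt_tsub_iff_right.mpr h1
    have h3 : c - (k : ℝ≥0∞)⁻¹ ≤ c - ((k : ℝ≥0∞) + 1)⁻¹ := tsub_le_tsub_left hinv c
    have h4 : b < c - ((k : ℝ≥0∞) + 1)⁻¹ := lt_of_lt_of_le h2 h3
    exact lt_of_lt_of_le (h4.trans (hJqlb k)) (le_iSup (fun n => J (q n).1 (q n).2) k)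
  have hMCT : ∫⁻ ω, ENNReal.ofReal (arctan (ginf ω) + 2) ∂μ = c := by
    have hstep : ∫⁻ ω, ⨆ n, ENNReal.ofReal (arctan (g n ω) + 2) ∂μ
        = ⨆ n, ∫⁻ ω, ENNReal.ofReal (arctan (g n ω) + 2) ∂μ := by
      refine lintegral_iSup' (fun n => ((continuous_arctan.measurable.comp (hgm n)).add
        measurable_const).ennreal_ofReal.aemeasurable) ?_
      filter_upwards [hgood] with ω hω
      exact monotone_nat_of_le_succ fun n => ENNReal.ofReal_le_ofReal
        (by linarith [arctan_strictMono.monotone (hω.2.1 n)])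
    have hptw : ∀ᵐ ω ∂μ, (⨆ n, ENNReal.ofReal (arctan (g n ω) + 2))
        = ENNReal.ofReal (arctan (ginf ω) + 2) := by
      filter_upwards [hkey] with ω hω
      obtain ⟨ht, _, hmono'⟩ := hω
      have hmφ : Monotone fun n => ENNReal.ofReal (arctan (g n ω) + 2) :=
        fun a b hab => ENNReal.ofReal_le_ofReal
          (by linarith [arctan_strictMono.monotone (hmono' hab)])
      have htφ : Tendsto (fun n => ENNReal.ofReal (arctan (g n ω) + 2)) atTop
          (nhds (ENNReal.ofReal (arctan (ginf ω) + 2))) := by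
        refine (ENNReal.continuous_ofReal.tendsto _).comp ?_
        exact Tendsto.add_const 2 ((continuous_arctan.tendsto _).comp ht)
      exact tendsto_nhds_unique (tendsto_atTop_iSup hmφ) htφ
    calc ∫⁻ ω, ENNReal.ofReal (arctan (ginf ω) + 2) ∂μ
        = ∫⁻ ω, ⨆ n, ENNReal.ofReal (arctan (g n ω) + 2) ∂μ :=
          lintegral_congr_ae (hptw.mono fun ω h => h.symm)
      _ = ⨆ n, ∫⁻ ω, ENNReal.ofReal (arctan (g n ω) + 2) ∂μ := hstep
      _ = c := hsupc
  -- `ginf` essentially dominates all pairwise distances in `H`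
  have hub : ∀ x ∈ H, ∀ y ∈ H, ∀ᵐ ω ∂μ, N.rnorm (x - y) ω ≤ ginf ω := by
    intro x hx y hy
    set f : Ω → ℝ := N.rnorm (x - y) with hfdef
    have hfm : Measurable f := N.measurable_rnorm _
    have hψle : ∀ n, ∫⁻ ω, ENNReal.ofReal (arctan (max (g n ω) (f ω)) + 2) ∂μ ≤ c := by
      intro n
      have hmp := N.maxPair_mem hconv (hqmem n).1 (hqmem n).2 hx hy
        (x := q n) (y := (x, y))
      have heq : ∫⁻ ω, ENNReal.ofReal (arctan (max (g n ω) (f ω)) + 2) ∂μ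
          = J (N.maxPair (q n) (x, y)).1 (N.maxPair (q n) (x, y)).2 := by
        refine lintegral_congr_ae ?_
        filter_upwards [N.rnorm_maxPair (q n) (x, y)] with ω h
        rw [h]
      rw [heq]
      exact le_iSup_of_le (N.maxPair (q n) (x, y)) (le_iSup_of_le hmp le_rfl)
    have hstep : ∫⁻ ω, ⨆ n, ENNReal.ofReal (arctan (max (g n ω) (f ω)) + 2) ∂μ
        = ⨆ n, ∫⁻ ω, ENNReal.ofReal (arctan (max (g n ω) (f ω)) + 2) ∂μ := by
      refine lintegral_iSup' (fun n => ((continuous_arctan.measurable.comp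
        ((hgm n).max hfm)).add measurable_const).ennreal_ofReal.aemeasurable) ?_
      filter_upwards [hgood] with ω hω
      refine monotone_nat_of_le_succ fun n => ENNReal.ofReal_le_ofReal ?_
      have : max (g n ω) (f ω) ≤ max (g (n + 1) ω) (f ω) :=
        max_le_max (hω.2.1 n) le_rfl
      linarith [arctan_strictMono.monotone this]
    have hptw : ∀ᵐ ω ∂μ, (⨆ n, ENNReal.ofReal (arctan (max (g n ω) (f ω)) + 2))
        = ENNReal.ofReal (arctan (max (ginf ω) (f ω)) + 2) := by
      filter_upwards [hkey] with ω hω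
      obtain ⟨ht, _, hmono'⟩ := hω
      have hmφ : Monotone fun n => ENNReal.ofReal (arctan (max (g n ω) (f ω)) + 2) := by
        intro a b hab
        refine ENNReal.ofReal_le_ofReal ?_
        have : max (g a ω) (f ω) ≤ max (g b ω) (f ω) := max_le_max (hmono' hab) le_rfl
        linarith [arctan_strictMono.monotone this]
      have htφ : Tendsto (fun n => ENNReal.ofReal (arctan (max (g n ω) (f ω)) + 2)) atTop
          (nhds (ENNReal.ofReal (arctan (max (ginf ω) (f ω)) + 2))) := by
        refine (ENNReal.continuous_ofReal.tendsto _).comp ?_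
        refine Tendsto.add_const 2 ((continuous_arctan.tendsto _).comp ?_)
        exact Tendsto.max ht tendsto_const_nhds
      exact tendsto_nhds_unique (tendsto_atTop_iSup hmφ) htφ
    have hIψ : ∫⁻ ω, ENNReal.ofReal (arctan (max (ginf ω) (f ω)) + 2) ∂μ ≤ c := by
      calc ∫⁻ ω, ENNReal.ofReal (arctan (max (ginf ω) (f ω)) + 2) ∂μ
          = ∫⁻ ω, ⨆ n, ENNReal.ofReal (arctan (max (g n ω) (f ω)) + 2) ∂μ :=
            lintegral_congr_ae (hptw.mono fun ω h => h.symm)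
        _ = ⨆ n, ∫⁻ ω, ENNReal.ofReal (arctan (max (g n ω) (f ω)) + 2) ∂μ := hstep
        _ ≤ c := iSup_le hψle
    -- now compare the two integrals
    set F : Ω → ℝ≥0∞ := fun ω => ENNReal.ofReal (arctan (ginf ω) + 2) with hFdef
    set Gf : Ω → ℝ≥0∞ := fun ω => ENNReal.ofReal (arctan (max (ginf ω) (f ω)) + 2)
      with hGdef
    have hFm : Measurable F :=
      ((continuous_arctan.measurable.comp hginfm).add measurable_const).ennreal_ofReal
    have hGm : Measurable Gf := ((continuous_arctan.measurable.comp
      (hginfm.max hfm)).add measurable_const).ennreal_ofReal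
    have hFG : ∀ ω, F ω ≤ Gf ω := by
      intro ω
      refine ENNReal.ofReal_le_ofReal ?_
      have : ginf ω ≤ max (ginf ω) (f ω) := le_max_left _ _
      linarith [arctan_strictMono.monotone this]
    have hsub : ∫⁻ ω, (Gf ω - F ω) ∂μ = ∫⁻ ω, Gf ω ∂μ - ∫⁻ ω, F ω ∂μ :=
      lintegral_sub hFm (by rw [show ∫⁻ ω, F ω ∂μ = c from hMCT]; exact hctop)
        (Filter.Eventually.of_forall hFG)
    have hzero : ∫⁻ ω, (Gf ω - F ω) ∂μ = 0 := by
      rw [hsub, show ∫⁻ ω, F ω ∂μ = c from hMCT]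
      exact tsub_eq_zero_of_le hIψ
    have hae0 : (fun ω => Gf ω - F ω) =ᵐ[μ] 0 :=
      (lintegral_eq_zero_iff' ((hGm.sub hFm).aemeasurable)).mp hzero
    filter_upwards [hae0] with ω hω
    have hle : Gf ω ≤ F ω := tsub_eq_zero_iff_le.mp hω
    have heq : Gf ω = F ω := le_antisymm hle (hFG ω)
    have h2 : arctan (max (ginf ω) (f ω)) + 2 = arctan (ginf ω) + 2 :=
      (ENNReal.ofReal_eq_ofReal_iff (harctan_nonneg _) (harctan_nonneg _)).mp heq
    have h3 : max (ginf ω) (f ω) = ginf ω := arctan_injective (by linarith)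
    exact max_eq_left_iff.mp h3
  have hDle : ∀ᵐ ω ∂μ, D ω ≤ ginf ω := hDmin ginf hginfm hub
  -- now build the concatenated pair
  set C : ℕ → Set Ω := fun n => {ω | D ω ≤ 2 * g n ω} with hCdef
  have hCm : ∀ n, MeasurableSet (C n) :=
    fun n => measurableSet_le hDmeas (measurable_const.mul (hgm n))
  set B : ℕ → Set Ω := fun n => ⋃ k ∈ Finset.range (n + 1), C k with hBdef
  have hBm : ∀ n, MeasurableSet (B n) :=
    fun n => (Finset.range (n + 1)).measurableSet_biUnion fun k _ => hCm k
  have hBmono : Monotone B := by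
    intro a b hab ω hω
    rcases Set.mem_iUnion₂.mp hω with ⟨k, hk, hmem⟩
    refine Set.mem_iUnion₂.mpr ⟨k, ?_, hmem⟩
    rw [Finset.mem_range] at hk ⊢
    omega
  have hCB : ∀ n, C n ⊆ B n := by
    intro n ω hω
    exact Set.mem_biUnion (Finset.self_mem_range_succ n) hω
  have hcover : ∀ᵐ ω ∂μ, ω ∈ ⋃ n, B n := by
    filter_upwards [hkey, hDle, hgood] with ω hk hle hg
    rcases le_or_gt (D ω) 0 with hD0 | hD0
    · exact Set.mem_iUnion.mpr ⟨0, hCB 0 (by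
        simp only [hCdef, Set.mem_setOf_eq]
        linarith [hg.1 0])⟩
    · have h1 : D ω / 2 < ginf ω := by linarith
      have h2 : ∀ᶠ n in atTop, D ω / 2 < g n ω := hk.1.eventually (eventually_gt_nhds h1)
      obtain ⟨n, hn⟩ := h2.exists
      exact Set.mem_iUnion.mpr ⟨n, hCB n (by
        simp only [hCdef, Set.mem_setOf_eq]
        linarith)⟩
  have hμB : Tendsto (fun n => μ (B n)ᶜ) atTop (nhds 0) := by
    have hUm : MeasurableSet (⋃ n, B n) := MeasurableSet.iUnion hBm
    have hU0 : μ (⋃ n, B n)ᶜ = 0 := by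
      rw [ae_iff] at hcover
      exact hcover
    have hU1 : μ (⋃ n, B n) = 1 := by
      have h1 := measure_compl hUm (measure_ne_top μ _)
      rw [hU0, measure_univ] at h1
      have h2 : μ (⋃ n, B n) ≤ 1 := prob_le_one
      have h3 : (1 : ℝ≥0∞) ≤ μ (⋃ n, B n) := tsub_eq_zero_iff_le.mp h1.symm
      exact le_antisymm h2 h3
    have h4 : Tendsto (fun n => μ (B n)) atTop (nhds 1) := by
      have := tendsto_measure_iUnion_atTop (μ := μ) hBmono
      rwa [hU1] at this
    have h5 : Tendsto (fun n => (1 : ℝ≥0∞) - μ (B n)) atTop (nhds (1 - 1)) :=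
      ENNReal.Tendsto.sub tendsto_const_nhds h4 (Or.inl ENNReal.one_ne_top)
    have h6 : (fun n => (1 : ℝ≥0∞) - μ (B n)) = fun n => μ (B n)ᶜ := by
      funext n
      rw [measure_compl (hBm n) (measure_ne_top μ _), measure_univ]
    rw [h6] at h5
    simpa using h5
  obtain ⟨u, hu, huP⟩ := N.concat_exists hcomp hconv hcl (fun n => (q n).1)
    (fun n => (hqmem n).1) hBm hBmono hμB
  obtain ⟨v, hv, hvP⟩ := N.concat_exists hcomp hconv hcl (fun n => (q n).2)
    (fun n => (hqmem n).2) hBm hBmono hμB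
  refine ⟨u, hu, v, hv, ?_⟩
  -- on `B n` the norm of `u - v` equals that of the partial concatenation
  have hP : ∀ n, ∀ᵐ ω ∂μ, ω ∈ B n →
      D ω ≤ 2 * N.rnorm (cseq (fun k => (q k).1) B n - cseq (fun k => (q k).2) B n) ω := by
    intro n
    induction n with
    | zero =>
      filter_upwards [] with ω hω
      simp only [hBdef] at hω
      rcases Set.mem_iUnion₂.mp hω with ⟨k, hk, hmem⟩
      have hk0 : k = 0 := by simpa [Finset.mem_range] using hk
      subst hk0
      rw [cseq_zero, cseq_zero]
      exact hmem
    | succ n ih =>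
      have hdiff : cseq (fun k => (q k).1) B (n + 1) - cseq (fun k => (q k).2) B (n + 1)
          = indR (B n) • (cseq (fun k => (q k).1) B n - cseq (fun k => (q k).2) B n)
            + indR (B n)ᶜ • ((q (n + 1)).1 - (q (n + 1)).2) := by
        rw [cseq_succ, cseq_succ, concat_sub]
      filter_upwards [ih, N.rnorm_concat (hBm n)
        (cseq (fun k => (q k).1) B n - cseq (fun k => (q k).2) B n)
        ((q (n + 1)).1 - (q (n + 1)).2)] with ω hih hcon hω
      rw [hdiff]
      by_cases hc : ω ∈ B n
      · rw [hcon.1 hc]; exact hih hc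
      · rw [hcon.2 hc]
        have hCn : ω ∈ C (n + 1) := by
          simp only [hBdef] at hω
          rcases Set.mem_iUnion₂.mp hω with ⟨k, hk, hmem⟩
          rw [Finset.mem_range] at hk
          rcases Nat.lt_succ_iff_lt_or_eq.mp hk with hk' | hk'
          · exact absurd (hBmono (Nat.lt_succ_iff.mp hk') (hCB k hmem)) hc
          · rwa [hk'] at hmem
        exact hCn
  have hP' : ∀ n, ∀ᵐ ω ∂μ, ω ∈ B n → D ω ≤ 2 * N.rnorm (u - v) ω := by
    intro n
    have he : indR (B n) • (u - v) = indR (B n) •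
        (cseq (fun k => (q k).1) B n - cseq (fun k => (q k).2) B n) := by
      rw [smul_sub, huP n, hvP n, ← smul_sub]
    filter_upwards [hP n, N.rnorm_indR_smul (hBm n) (u - v),
      N.rnorm_indR_smul (hBm n)
        (cseq (fun k => (q k).1) B n - cseq (fun k => (q k).2) B n)] with ω h1 h2 h3 hω
    have h4 : indR (B n) ω * N.rnorm (u - v) ω = indR (B n) ω *
        N.rnorm (cseq (fun k => (q k).1) B n - cseq (fun k => (q k).2) B n) ω := by
      rw [← h2, he, h3]
    rw [indR_mem hω, one_mul, one_mul] at h4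
    rw [h4]
    exact h1 hω
  filter_upwards [ae_all_iff.mpr hP', hcover] with ω hall hcov
  obtain ⟨n, hn⟩ := Set.mem_iUnion.mp hcov
  exact hall n hn

end RNModule

/-- Let `(E, ‖·‖)` be a complete RN module with full support which is random
uniformly convex. Then every closed `L⁰`-convex subset `G` of `E` has random normal
structure. -/
theorem stmt7
    {Ω E : Type*} [MeasurableSpace Ω] {μ : Measure Ω} [IsProbabilityMeasure μ]
    [AddCommGroup E] [Module (Ω → ℝ) E]
    (N : RNModule Ω μ E) (hcomp : N.Complete)
    (hfull : N.FullSupport) (hruc : N.RandomUniformlyConvex)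
    (G : Set E) (hGc : N.IsClosedSet G) (hGconv : N.L0Convex G) :
    N.RandomNormalStructure G := by
  intro H hHG hne hcl hconv hbdd D hD hDpos
  obtain ⟨u, hu, v, hv, huv⟩ := N.exists_diam_pair hcomp hne hconv hcl hbdd hD
  obtain ⟨hDmeas, hDub, hDmin⟩ := hD
  obtain ⟨δ, hδm, ⟨c0, hc0, hδb⟩, hδprop⟩ := hruc (fun _ : Ω => (1/2 : ℝ)) measurable_const
    ⟨1/2, by norm_num, Filter.Eventually.of_forall fun ω => by norm_num⟩
  set δ' : Ω → ℝ := fun ω => min (δ ω) (1/2) with hδ'def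
  have hδ'm : Measurable δ' := hδm.min measurable_const
  set r : Ω → ℝ := fun ω => (1 - δ' ω) * max (D ω) 0 with hrdef
  have hrm : Measurable r := (measurable_const.sub hδ'm).mul (hDmeas.max measurable_const)
  set hmid : E := (fun _ : Ω => (1/2 : ℝ)) • u + ((1 : Ω → ℝ) - fun _ => (1/2 : ℝ)) • v
    with hmiddef
  have hmidH : hmid ∈ H := hconv u hu v hv _ measurable_const
    (fun ω => by norm_num) (fun ω => by norm_num)
  have e1 : ((1 : Ω → ℝ) - fun _ => (1/2 : ℝ)) = (fun _ : Ω => (1/2 : ℝ)) := by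
    funext ω
    show (1 : ℝ) - 1/2 = 1/2
    norm_num
  refine ⟨hmid, hmidH, r, hrm, ?_, ?_⟩
  · -- the random radius of `hmid` is at most `r`
    intro z hz
    set ξ : Ω → ℝ := fun ω => if 0 < D ω then (D ω)⁻¹ else 0 with hξdef
    have hξm : Measurable ξ :=
      Measurable.ite (measurableSet_lt measurable_const hDmeas) hDmeas.inv measurable_const
    have hξpos : ∀ ω, 0 < D ω → ξ ω = (D ω)⁻¹ := fun ω hω => if_pos hω
    have hξzero : ∀ ω, ¬ 0 < D ω → ξ ω = 0 := fun ω hω => if_neg hω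
    have hξnn : ∀ ω, 0 ≤ ξ ω := by
      intro ω
      by_cases hω : 0 < D ω
      · rw [hξpos ω hω]
        exact inv_nonneg.mpr hω.le
      · rw [hξzero ω hω]
    set x : E := ξ • (z - u) with hxdef
    set y : E := ξ • (z - v) with hydef
    set w : E := (z - u) + (z - v) with hwdef
    have hxn : N.rnorm x =ᵐ[μ] fun ω => ξ ω * N.rnorm (z - u) ω := by
      filter_upwards [N.rnorm_smul ξ hξm (z - u)] with ω h
      rw [← hxdef] at h
      rw [h, abs_of_nonneg (hξnn ω)]
    have hyn : N.rnorm y =ᵐ[μ] fun ω => ξ ω * N.rnorm (z - v) ω := by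
      filter_upwards [N.rnorm_smul ξ hξm (z - v)] with ω h
      rw [← hydef] at h
      rw [h, abs_of_nonneg (hξnn ω)]
    have hxy : x - y = ξ • (v - u) := by
      rw [hxdef, hydef, ← smul_sub]
      congr 1
      abel
    have hxyn : N.rnorm (x - y) =ᵐ[μ] fun ω => ξ ω * N.rnorm (v - u) ω := by
      rw [hxy]
      filter_upwards [N.rnorm_smul ξ hξm (v - u)] with ω h
      rw [h, abs_of_nonneg (hξnn ω)]
    have hxyadd : x + y = ξ • w := by rw [hxdef, hydef, hwdef, smul_add]
    have hxyaddn : N.rnorm (x + y) =ᵐ[μ] fun ω => ξ ω * N.rnorm w ω := by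
      rw [hxyadd]
      filter_upwards [N.rnorm_smul ξ hξm w] with ω h
      rw [h, abs_of_nonneg (hξnn ω)]
    -- hmid - z = (-(1/2)) • w
    have hmidz : hmid - z = (fun _ : Ω => (-(1/2) : ℝ)) • w := by
      have e3 : ((fun _ : Ω => (1/2 : ℝ)) + fun _ : Ω => (1/2 : ℝ)) = (1 : Ω → ℝ) := by
        funext ω
        show (1/2 : ℝ) + 1/2 = 1
        norm_num
      have e4 : z = (fun _ : Ω => (1/2 : ℝ)) • z + (fun _ : Ω => (1/2 : ℝ)) • z := by
        rw [← add_smul, e3, one_smul]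
      have e5 : hmid - z = (fun _ : Ω => (1/2 : ℝ)) • ((u - z) + (v - z)) := by
        rw [hmiddef, e1]
        nth_rewrite 1 [e4]
        rw [smul_add, smul_sub, smul_sub]
        abel
      have e6 : (u - z) + (v - z) = -w := by rw [hwdef]; abel
      rw [e5, e6, smul_neg, ← neg_smul]
      rfl
    have hmidzn : N.rnorm (hmid - z) =ᵐ[μ] fun ω => (1/2 : ℝ) * N.rnorm w ω := by
      rw [hmidz]
      filter_upwards [N.rnorm_smul _ measurable_const w] with ω h
      rw [h]
      norm_num
    have hzu_le : ∀ᵐ ω ∂μ, N.rnorm (z - u) ω ≤ D ω := hDub z hz u hu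
    have hzv_le : ∀ᵐ ω ∂μ, N.rnorm (z - v) ω ≤ D ω := hDub z hz v hv
    have hmz_le : ∀ᵐ ω ∂μ, N.rnorm (hmid - z) ω ≤ D ω := hDub hmid hmidH z hz
    have hx1 : ∀ᵐ ω ∂μ, N.rnorm x ω ≤ 1 := by
      filter_upwards [hxn, hzu_le, N.rnorm_nonneg (z - u)] with ω h1 h2 h3
      rw [h1]
      by_cases hω : 0 < D ω
      · rw [hξpos ω hω]
        calc (D ω)⁻¹ * N.rnorm (z - u) ω ≤ (D ω)⁻¹ * D ω :=
            mul_le_mul_of_nonneg_left h2 (inv_nonneg.mpr hω.le)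
          _ = 1 := inv_mul_cancel₀ hω.ne'
      · rw [hξzero ω hω, zero_mul]
        norm_num
    have hy1 : ∀ᵐ ω ∂μ, N.rnorm y ω ≤ 1 := by
      filter_upwards [hyn, hzv_le, N.rnorm_nonneg (z - v)] with ω h1 h2 h3
      rw [h1]
      by_cases hω : 0 < D ω
      · rw [hξpos ω hω]
        calc (D ω)⁻¹ * N.rnorm (z - v) ω ≤ (D ω)⁻¹ * D ω :=
            mul_le_mul_of_nonneg_left h2 (inv_nonneg.mpr hω.le)
          _ = 1 := inv_mul_cancel₀ hω.ne'
      · rw [hξzero ω hω, zero_mul]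
        norm_num
    set A : Set Ω := {ω | 0 < D ω ∧ 0 < N.rnorm x ω ∧ 0 < N.rnorm y ω ∧
      0 < N.rnorm (x - y) ω} with hAdef
    have hAm : MeasurableSet A := by
      have : A = {ω | 0 < D ω} ∩ ({ω | 0 < N.rnorm x ω} ∩ ({ω | 0 < N.rnorm y ω} ∩
          {ω | 0 < N.rnorm (x - y) ω})) := by
        ext ω; simp [hAdef, Set.mem_setOf_eq, and_assoc]
      rw [this]
      exact (measurableSet_lt measurable_const hDmeas).inter
        ((measurableSet_lt measurable_const (N.measurable_rnorm x)).inter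
          ((measurableSet_lt measurable_const (N.measurable_rnorm y)).inter
            (measurableSet_lt measurable_const (N.measurable_rnorm (x - y)))))
    -- key computation of `rnorm (x - y)` on `{0 < D}`
    have hxyhalf : ∀ᵐ ω ∂μ, 0 < D ω → (1/2 : ℝ) ≤ N.rnorm (x - y) ω := by
      filter_upwards [hxyn, huv, N.rnorm_sub_comm v u] with ω e2 e3 e4 hω
      rw [e2, hξpos ω hω]
      have h5 : D ω / 2 ≤ N.rnorm (v - u) ω := by
        rw [e4]; linarith
      calc (1/2 : ℝ) = (D ω)⁻¹ * (D ω / 2) := by field_simp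
        _ ≤ (D ω)⁻¹ * N.rnorm (v - u) ω :=
            mul_le_mul_of_nonneg_left h5 (inv_nonneg.mpr hω.le)
    have hεA : ∀ᵐ ω ∂μ, ω ∈ A → (fun _ : Ω => (1/2 : ℝ)) ω ≤ N.rnorm (x - y) ω := by
      filter_upwards [hxyhalf] with ω h1 hω
      exact h1 hω.1
    have hposA : ∀ᵐ ω ∂μ, ω ∈ A → 0 < N.rnorm x ω ∧ 0 < N.rnorm y ω ∧
        0 < N.rnorm (x - y) ω :=
      Filter.Eventually.of_forall fun ω hω => ⟨hω.2.1, hω.2.2.1, hω.2.2.2⟩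
    have hconc : ∀ᵐ ω ∂μ, ω ∈ A → N.rnorm (x + y) ω ≤ 2 * (1 - δ ω) := by
      rcases eq_or_lt_of_le (zero_le : 0 ≤ μ A) with hμA | hμA
      · filter_upwards [(measure_eq_zero_iff_ae_notMem).mp hμA.symm] with ω hω
        exact fun h' => absurd h' hω
      · exact hδprop x y hx1 hy1 A hAm hμA hposA hεA
    -- pointwise conclusion
    filter_upwards [hmidzn, hxyaddn, hconc, hxn, hyn, hxyhalf, hzu_le, hzv_le, hmz_le,
      N.rnorm_nonneg (z - u), N.rnorm_nonneg (z - v), N.rnorm_nonneg w,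
      N.rnorm_add (z - u) (z - v), hδb] with ω
      f1 f2 f3 f4 f5 f6 f7 f8 f9 f10 f11 f12 f13 f14
    have hδ'le : δ' ω ≤ δ ω := min_le_left _ _
    have hδ'half : δ' ω ≤ 1/2 := min_le_right _ _
    rcases le_or_gt (D ω) 0 with hD0 | hD0
    · -- degenerate part: D ≤ 0
      have hr0 : r ω = 0 := by
        rw [hrdef]
        show (1 - δ' ω) * max (D ω) 0 = 0
        rw [max_eq_right hD0, mul_zero]
      rw [hr0]
      exact le_trans f9 hD0
    · have hrD : r ω = (1 - δ' ω) * D ω := by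
        rw [hrdef]
        show (1 - δ' ω) * max (D ω) 0 = _
        rw [max_eq_left hD0.le]
      have hwadd : N.rnorm w ω ≤ N.rnorm (z - u) ω + N.rnorm (z - v) ω := f13
      have hξω : ξ ω = (D ω)⁻¹ := hξpos ω hD0
      by_cases hA : ω ∈ A
      · -- main case: apply random uniform convexity
        have h6 : (D ω)⁻¹ * N.rnorm w ω ≤ 2 * (1 - δ ω) := by
          have := f3 hA
          rwa [f2, hξω] at this
        have h7 : N.rnorm w ω ≤ 2 * (1 - δ ω) * D ω := by
          have h8 := mul_le_mul_of_nonneg_left h6 hD0.le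
          rw [← mul_assoc, mul_inv_cancel₀ hD0.ne', one_mul] at h8
          linarith
        have h9 : (1 - δ ω) * D ω ≤ (1 - δ' ω) * D ω :=
          mul_le_mul_of_nonneg_right (by linarith) hD0.le
        rw [f1, hrD]
        linarith
      · -- on the complement one of `z - u`, `z - v` is null
        have hxygt : 0 < N.rnorm (x - y) ω := lt_of_lt_of_le (by norm_num) (f6 hD0)
        have hne' : N.rnorm (z - u) ω ≤ 0 ∨ N.rnorm (z - v) ω ≤ 0 := by
          by_contra hcon
          push_neg at hcon
          obtain ⟨hc1, hc2⟩ := hcon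
          have hxpos : 0 < N.rnorm x ω := by
            rw [f4, hξω]
            exact mul_pos (inv_pos.mpr hD0) hc1
          have hypos : 0 < N.rnorm y ω := by
            rw [f5, hξω]
            exact mul_pos (inv_pos.mpr hD0) hc2
          exact hA ⟨hD0, hxpos, hypos, hxygt⟩
        have hwD : N.rnorm w ω ≤ D ω := by
          rcases hne' with hc | hc
          · have : N.rnorm (z - u) ω = 0 := le_antisymm hc f10
            linarith
          · have : N.rnorm (z - v) ω = 0 := le_antisymm hc f11
            linarith
        rw [f1, hrD]
        nlinarith
  · -- the radius is strictly smaller than the diameter where the latter is positive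
    filter_upwards [hδb] with ω hδω hD0
    have h1 : 0 < δ' ω := lt_min (lt_of_lt_of_le hc0 hδω.1) (by norm_num)
    have hrD : r ω = (1 - δ' ω) * D ω := by
      rw [hrdef]
      show (1 - δ' ω) * max (D ω) 0 = _
      rw [max_eq_left hD0.le]
    rw [hrD]
    calc (1 - δ' ω) * D ω < 1 * D ω :=
        mul_lt_mul_of_pos_right (by linarith) hD0
      _ = D ω := one_mul _
end
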